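/- arXiv:2309.01309 — 6 statements merged into one kernel-verified Lean document; each statement's English description precedes it below -/
import Mathlib

section
/- Let n ≥ 1 and let u, v ∈ S_n. Every minimal-length directed path from u to v in the quantum Bruhat graph Γ_n has weight vector (d_1, ..., d_{n−1}) ∈ ℤ^{n−1} given by d_k = depth(u[k], v[k]) for each k ∈ {1,...,n−1}. In particular, all minimal-length directed paths from u to v have the same weight. -/
/-- Number of inversions of a permutation of `Fin n`. -/
def invNum {n : ℕ} (w : Equiv.Perm (Fin n)) : ℕ :=
  (Finset.univ.filter (fun p : Fin n × Fin n => p.1 < p.2 ∧ w p.2 < w p.1)).card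

/-- Directed edge of the quantum Bruhat graph `Γ_n`. -/
def qbEdge {n : ℕ} (w w' : Equiv.Perm (Fin n)) : Prop :=
  ∃ i j : Fin n, i < j ∧ w' = w * Equiv.swap i j ∧
    (invNum w' = invNum w + 1 ∨ invNum w' + 2 * (j.val - i.val) = invNum w + 1)

/-- Directed edge of the quantum Bruhat graph together with its weight vector in `ℤ^{n-1}`;
coordinate `m : Fin (n-1)` corresponds to the variable `q_{m+1}` (1-indexed). -/
def qbEdgeWt {n : ℕ} (w w' : Equiv.Perm (Fin n)) (c : Fin (n - 1) → ℤ) : Prop :=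
  ∃ i j : Fin n, i < j ∧ w' = w * Equiv.swap i j ∧
    ((invNum w' = invNum w + 1 ∧ c = 0) ∨
     (invNum w' + 2 * (j.val - i.val) = invNum w + 1 ∧
      c = fun m => if i.val ≤ m.val ∧ m.val < j.val then 1 else 0))

/-- Directed paths in the quantum Bruhat graph from `u` to `v`,
recording the number of edges and the total weight. -/
inductive qbPathWt {n : ℕ} :
    Equiv.Perm (Fin n) → Equiv.Perm (Fin n) → ℕ → (Fin (n - 1) → ℤ) → Prop
  | refl (u : Equiv.Perm (Fin n)) : qbPathWt u u 0 0
  | step {u w v : Equiv.Perm (Fin n)} {len : ℕ} {c c' : Fin (n - 1) → ℤ} :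
      qbEdgeWt u w c → qbPathWt w v len c' → qbPathWt u v (len + 1) (c + c')

/-- `ℓ(u,v)`: minimal number of edges of a directed path from `u` to `v` in `Γ_n`. -/
noncomputable def qbDist {n : ℕ} (u v : Equiv.Perm (Fin n)) : ℕ :=
  sInf {k | ∃ c, qbPathWt u v k c}

/-- `depth(A,B)`: max over `0 ≤ x ≤ n` of `#(B ∩ {1,…,x}) − #(A ∩ {1,…,x})`
(`Fin n` is 0-indexed, so `{1,…,x}` corresponds to `val < x`). -/
def depthAB {n : ℕ} (A B : Finset (Fin n)) : ℕ :=
  (Finset.range (n + 1)).sup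
    (fun x => (B.filter (fun b => b.val < x)).card - (A.filter (fun a => a.val < x)).card)

/-- `w[k] = {w(1),…,w(k)}`. -/
def permSet {n : ℕ} (w : Equiv.Perm (Fin n)) (k : ℕ) : Finset (Fin n) :=
  (Finset.univ.filter (fun i : Fin n => i.val < k)).image w

/-- The Gale order on subsets of `Fin n` (componentwise comparison of sorted lists). -/
def galeLE {n : ℕ} (A B : Finset (Fin n)) : Prop :=
  A.card = B.card ∧ ∀ (k : ℕ) (hA : A.card = k) (hB : B.card = k) (t : Fin k),
    A.orderEmbOfFin hA t ≤ B.orderEmbOfFin hB t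

/-- The shifted Gale order `≤_r`; `r : Fin n` encodes the paper's `r = r.val + 1`, and
`x ≤_r y` iff `x - r ≤ y - r` in `Fin n`. -/
def shiftedGaleLE {n : ℕ} (r : Fin n) (A B : Finset (Fin n)) : Prop :=
  galeLE (A.image (fun x => x - r)) (B.image (fun x => x - r))

/-- The closed cyclic interval `[a,b]_c` in `Fin n`. -/
def cycIcc {n : ℕ} (a b : Fin n) : Finset (Fin n) :=
  Finset.univ.filter (fun x => (x - a).val ≤ (b - a).val)

/-- The half-open cyclic interval `[a,b)_c` in `Fin n`. -/
def cycIco {n : ℕ} (a b : Fin n) : Finset (Fin n) :=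
  Finset.univ.filter (fun x => (x - a).val < (b - a).val)

/-- A complete flag in `ℂ^n`: a chain `F_0 ⊆ F_1 ⊆ ⋯ ⊆ F_n` with `dim F_i = i`. -/
structure CompleteFlag (n : ℕ) where
  space : ℕ → Submodule ℂ (Fin n → ℂ)
  mono : Monotone space
  dim_eq : ∀ i, i ≤ n → Module.finrank ℂ (space i) = i

/-- The coordinate projection `Proj_S` (zeroing out coordinates outside `S`). -/
noncomputable def projS {n : ℕ} (S : Finset (Fin n)) : (Fin n → ℂ) →ₗ[ℂ] (Fin n → ℂ) :=
  LinearMap.pi (fun i => if i ∈ S then LinearMap.proj i else 0)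

/-- `dim Proj_S (V)`. -/
noncomputable def projDim {n : ℕ} (S : Finset (Fin n)) (V : Submodule ℂ (Fin n → ℂ)) : ℕ :=
  Module.finrank ℂ (V.map (projS S))

/-- Membership in the tilted Richardson variety `T_{u,v,a}` (rank conditions, `≤`). -/
def memT {n : ℕ} [NeZero n] (u v : Equiv.Perm (Fin n)) (a : ℕ → Fin n)
    (F : CompleteFlag n) : Prop :=
  ∀ i : ℕ, 1 ≤ i → i ≤ n - 1 → ∀ j : Fin n,
    projDim (cycIcc (a i) j) (F.space i) ≤ (permSet u i ∩ cycIcc (a i) j).card ∧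
    projDim (cycIcc j (a i - 1)) (F.space i) ≤ (permSet v i ∩ cycIcc j (a i - 1)).card

/-- Membership in the open tilted Richardson variety `T°_{u,v,a}` (rank conditions, `=`). -/
def memT0 {n : ℕ} [NeZero n] (u v : Equiv.Perm (Fin n)) (a : ℕ → Fin n)
    (F : CompleteFlag n) : Prop :=
  ∀ i : ℕ, 1 ≤ i → i ≤ n - 1 → ∀ j : Fin n,
    projDim (cycIcc (a i) j) (F.space i) = (permSet u i ∩ cycIcc (a i) j).card ∧
    projDim (cycIcc j (a i - 1)) (F.space i) = (permSet v i ∩ cycIcc j (a i - 1)).card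

/-- `M` is a matrix representative of the flag `F`: the first `i` columns span `F_i`. -/
def IsFlagMatrix {n : ℕ} (F : CompleteFlag n) (M : Matrix (Fin n) (Fin n) ℂ) : Prop :=
  ∀ i : ℕ, i ≤ n →
    Submodule.span ℂ ((fun j : Fin n => M.transpose j) '' {j : Fin n | j.val < i}) = F.space i

/-- The Plücker minor `P_I(M)`: the determinant of the submatrix of `M` on rows `I`
and the first `#I` columns. -/
noncomputable def minorP {n : ℕ} (M : Matrix (Fin n) (Fin n) ℂ) (I : Finset (Fin n)) : ℂ :=
  Matrix.det (M.submatrix (fun t : Fin I.card => I.orderEmbOfFin rfl t)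
    (fun t : Fin I.card => Fin.castLE (by simpa using I.card_le_univ) t))

/-- The sequence `a` is flat for `(u,v)`. -/
def IsFlat {n : ℕ} (u v : Equiv.Perm (Fin n)) (a : ℕ → Fin n) : Prop :=
  (∀ k, 1 ≤ k → k ≤ n - 1 → shiftedGaleLE (a k) (permSet u k) (permSet v k)) ∧
  (∀ k, 2 ≤ k → k ≤ n - 1 → shiftedGaleLE (a k) (permSet u (k - 1)) (permSet v (k - 1)))

/-- The tilted Rothe diagram `D_a^↓(u)`; the pair `(i,k) : Fin n × Fin n` encodes the
paper's pair `(i.val + 1, k.val + 1)`. -/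
def Ddown {n : ℕ} (a : ℕ → Fin n) (u : Equiv.Perm (Fin n)) : Finset (Fin n × Fin n) :=
  Finset.univ.filter (fun p : Fin n × Fin n =>
    p.2.val < n - 1 ∧ (p.1 - a (p.2.val + 1)).val < (u p.2 - a (p.2.val + 1)).val ∧
      p.2.val < (u⁻¹ p.1).val)

/-- The tilted Rothe diagram `D_a^↑(v)`. -/
def Dup {n : ℕ} (a : ℕ → Fin n) (v : Equiv.Perm (Fin n)) : Finset (Fin n × Fin n) :=
  Finset.univ.filter (fun p : Fin n × Fin n =>
    p.2.val < n - 1 ∧ (v p.2 - a (p.2.val + 1)).val < (p.1 - a (p.2.val + 1)).val ∧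
      p.2.val < (v⁻¹ p.1).val)

/-- Membership in the cyclically rotated Grassmannian Richardson variety `R_{I,J,r}`. -/
def memR {n : ℕ} [NeZero n] (I J : Finset (Fin n)) (r : Fin n)
    (V : Submodule ℂ (Fin n → ℂ)) : Prop :=
  ∀ j : Fin n,
    projDim (cycIcc r j) V ≤ (I ∩ cycIcc r j).card ∧
    projDim (cycIcc j (r - 1)) V ≤ (J ∩ cycIcc j (r - 1)).card
section QBGAux

open Finset Equiv

lemma invNum_eq_sum {n : ℕ} (w : Equiv.Perm (Fin n)) :
    (invNum w : ℤ) = ∑ p : Fin n × Fin n, (if p.1 < p.2 ∧ w p.2 < w p.1 then (1:ℤ) else 0) := by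
  rw [invNum, Finset.card_filter]; push_cast; rfl

lemma aux_pointwise (iv jv av bv wI wJ wA wB : ℕ)
    (hij : iv < jv) (hw : wI < wJ)
    (e1 : av = iv → wA = wI) (e2 : av = jv → wA = wJ) (e3 : bv = iv → wB = wI)
    (e4 : bv = jv → wB = wJ)
    (e5 : wA = wI → av = iv) (e6 : wA = wJ → av = jv) (e7 : wB = wI → bv = iv)
    (e8 : wB = wJ → bv = jv)
    (e9 : av = bv → wA = wB) (e10 : wA = wB → av = bv) :
    (if (if av = iv then jv else if av = jv then iv else av)
        < (if bv = iv then jv else if bv = jv then iv else bv) ∧ wB < wA then (1:ℤ) else 0)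
      - (if av < bv ∧ wB < wA then 1 else 0)
    = (if av = jv ∧ bv = iv then 1 else 0)
      + (if bv = iv ∧ iv < av ∧ av < jv ∧ wI < wA then 1 else 0)
      - (if av = iv ∧ iv < bv ∧ bv < jv ∧ wB < wI then 1 else 0)
      + (if av = jv ∧ iv < bv ∧ bv < jv ∧ wB < wJ then 1 else 0)
      - (if bv = jv ∧ iv < av ∧ av < jv ∧ wJ < wA then 1 else 0) := by
  have hne : iv ≠ jv := Nat.ne_of_lt hij
  have hne' : jv ≠ iv := Nat.ne_of_gt hij
  rcases eq_or_ne av iv with h1 | h1 <;> rcases eq_or_ne av jv with h2 | h2 <;>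
    rcases eq_or_ne bv iv with h3 | h3 <;> rcases eq_or_ne bv jv with h4 | h4 <;>
    simp only [h1, h2, h3, h4, hne, hne', if_true, if_false, eq_self_iff_true,
      ite_true, ite_false, if_neg, if_pos, ne_eq, false_and, true_and, and_false,
      and_true, if_false] <;>
    split_ifs <;> omega

/-- swap value in val form -/
lemma swap_val {n : ℕ} (i j a : Fin n) :
    ((Equiv.swap i j) a).val
      = if a.val = i.val then j.val else if a.val = j.val then i.val else a.val := by
  rcases eq_or_ne a i with rfl | hai
  · simp [Equiv.swap_apply_left]
  · rcases eq_or_ne a j with rfl | haj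
    · rw [Equiv.swap_apply_right, if_neg (fun h => hai (Fin.ext h)), if_pos rfl]
    · rw [Equiv.swap_apply_of_ne_of_ne hai haj,
        if_neg (fun h => hai (Fin.ext h)), if_neg (fun h => haj (Fin.ext h))]

lemma sum_pair_snd {n : ℕ} (P : Fin n → Prop) [DecidablePred P] (t : Fin n) :
    ∑ p : Fin n × Fin n, (if p.2 = t ∧ P p.1 then (1:ℤ) else 0)
      = ((Finset.univ.filter P).card : ℤ) := by
  have h1 : ∀ x : Fin n, (∑ y : Fin n, if y = t ∧ P x then (1:ℤ) else 0)
      = if P x then (1:ℤ) else 0 := by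
    intro x
    by_cases h : P x
    · simp [h, Finset.sum_ite_eq']
    · simp [h]
  rw [Fintype.sum_prod_type]
  calc (∑ x : Fin n, ∑ y : Fin n, if y = t ∧ P x then (1:ℤ) else 0)
      = ∑ x : Fin n, if P x then (1:ℤ) else 0 := Finset.sum_congr rfl (fun x _ => h1 x)
    _ = ((Finset.univ.filter P).card : ℤ) := by rw [Finset.card_filter]; push_cast; rfl

lemma sum_pair_fst {n : ℕ} (P : Fin n → Prop) [DecidablePred P] (t : Fin n) :
    ∑ p : Fin n × Fin n, (if p.1 = t ∧ P p.2 then (1:ℤ) else 0)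
      = ((Finset.univ.filter P).card : ℤ) := by
  have h1 : ∀ x : Fin n, (∑ y : Fin n, if x = t ∧ P y then (1:ℤ) else 0)
      = if x = t then ((Finset.univ.filter P).card : ℤ) else 0 := by
    intro x
    by_cases h : x = t
    · simp only [h, true_and, if_pos rfl]
      rw [Finset.card_filter]; push_cast; rfl
    · simp [h]
  rw [Fintype.sum_prod_type]
  calc (∑ x : Fin n, ∑ y : Fin n, if x = t ∧ P y then (1:ℤ) else 0)
      = ∑ x : Fin n, if x = t then ((Finset.univ.filter P).card : ℤ) else 0 :=
        Finset.sum_congr rfl (fun x _ => h1 x)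
    _ = _ := by rw [Finset.sum_ite_eq' Finset.univ t]; simp

lemma sum_pair_eq {n : ℕ} (t s : Fin n) :
    ∑ p : Fin n × Fin n, (if p.1 = t ∧ p.2 = s then (1:ℤ) else 0) = 1 := by
  have := sum_pair_fst (fun y : Fin n => y = s) t
  rw [this]
  simp [Finset.filter_eq']

lemma invNum_swap_asc {n : ℕ} (w : Equiv.Perm (Fin n)) (i j : Fin n) (hij : i < j)
    (hw : w i < w j) :
    (invNum (w * Equiv.swap i j) : ℤ) = invNum w + 1 +
      2 * ((Finset.univ.filter
        (fun m : Fin n => i < m ∧ m < j ∧ w i < w m ∧ w m < w j)).card : ℤ) := by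
  classical
  have key : (invNum (w * Equiv.swap i j) : ℤ) - invNum w
      = ∑ p : Fin n × Fin n,
        (((if Equiv.swap i j p.1 < Equiv.swap i j p.2 ∧ w p.2 < w p.1 then (1:ℤ) else 0)
          - (if p.1 < p.2 ∧ w p.2 < w p.1 then 1 else 0))) := by
    rw [Finset.sum_sub_distrib, invNum_eq_sum, invNum_eq_sum]
    congr 1
    rw [← Equiv.sum_comp (Equiv.prodCongr (Equiv.swap i j) (Equiv.swap i j))
      (fun p : Fin n × Fin n =>
        if p.1 < p.2 ∧ (w * Equiv.swap i j) p.2 < (w * Equiv.swap i j) p.1 then (1:ℤ) else 0)]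
    apply Finset.sum_congr rfl
    intro p _
    simp only [Equiv.prodCongr_apply, Prod.map, Equiv.Perm.mul_apply, Equiv.swap_apply_self]
  have pw : ∀ p : Fin n × Fin n,
      ((if Equiv.swap i j p.1 < Equiv.swap i j p.2 ∧ w p.2 < w p.1 then (1:ℤ) else 0)
          - (if p.1 < p.2 ∧ w p.2 < w p.1 then 1 else 0))
      = (if p.1 = j ∧ p.2 = i then 1 else 0)
      + (if p.2 = i ∧ i < p.1 ∧ p.1 < j ∧ w i < w p.1 then 1 else 0)
      - (if p.1 = i ∧ i < p.2 ∧ p.2 < j ∧ w p.2 < w i then 1 else 0)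
      + (if p.1 = j ∧ i < p.2 ∧ p.2 < j ∧ w p.2 < w j then 1 else 0)
      - (if p.2 = j ∧ i < p.1 ∧ p.1 < j ∧ w j < w p.1 then 1 else 0) := by
    intro ⟨a, b⟩
    have conv : ∀ (x y : Fin n), (x = y) = (x.val = y.val) := by
      intro x y; simp [Fin.ext_iff]
    simp only [Fin.lt_def, conv, swap_val]
    exact aux_pointwise i.val j.val a.val b.val (w i).val (w j).val (w a).val (w b).val
      hij hw
      (fun h => congrArg (fun t => (w t).val) (Fin.ext h))
      (fun h => congrArg (fun t => (w t).val) (Fin.ext h))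
      (fun h => congrArg (fun t => (w t).val) (Fin.ext h))
      (fun h => congrArg (fun t => (w t).val) (Fin.ext h))
      (fun h => congrArg Fin.val (w.injective (Fin.ext h)))
      (fun h => congrArg Fin.val (w.injective (Fin.ext h)))
      (fun h => congrArg Fin.val (w.injective (Fin.ext h)))
      (fun h => congrArg Fin.val (w.injective (Fin.ext h)))
      (fun h => congrArg (fun t => (w t).val) (Fin.ext h))
      (fun h => congrArg Fin.val (w.injective (Fin.ext h)))
  have cardz : ∀ (P : Fin n → Prop) (inst : DecidablePred P),
      ((Finset.univ.filter P).card : ℤ) = ∑ m : Fin n, (if P m then (1:ℤ) else 0) := by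
    intro P inst
    rw [Finset.card_filter]; push_cast; rfl
  have sums : (∑ p : Fin n × Fin n,
      ((if p.1 = j ∧ p.2 = i then (1:ℤ) else 0)
      + (if p.2 = i ∧ i < p.1 ∧ p.1 < j ∧ w i < w p.1 then 1 else 0)
      - (if p.1 = i ∧ i < p.2 ∧ p.2 < j ∧ w p.2 < w i then 1 else 0)
      + (if p.1 = j ∧ i < p.2 ∧ p.2 < j ∧ w p.2 < w j then 1 else 0)
      - (if p.2 = j ∧ i < p.1 ∧ p.1 < j ∧ w j < w p.1 then 1 else 0)))
      = 1 + ((Finset.univ.filter (fun m : Fin n => i < m ∧ m < j ∧ w i < w m)).card : ℤ)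
        - ((Finset.univ.filter (fun m : Fin n => i < m ∧ m < j ∧ w m < w i)).card : ℤ)
        + ((Finset.univ.filter (fun m : Fin n => i < m ∧ m < j ∧ w m < w j)).card : ℤ)
        - ((Finset.univ.filter (fun m : Fin n => i < m ∧ m < j ∧ w j < w m)).card : ℤ) := by
    rw [Finset.sum_sub_distrib, Finset.sum_add_distrib, Finset.sum_sub_distrib,
      Finset.sum_add_distrib, sum_pair_eq,
      sum_pair_snd (fun m : Fin n => i < m ∧ m < j ∧ w i < w m) i,
      sum_pair_fst (fun m : Fin n => i < m ∧ m < j ∧ w m < w i) i,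
      sum_pair_fst (fun m : Fin n => i < m ∧ m < j ∧ w m < w j) j,
      sum_pair_snd (fun m : Fin n => i < m ∧ m < j ∧ w j < w m) j]
  have ptc : ∀ m : Fin n,
      ((if i < m ∧ m < j ∧ w i < w m then (1:ℤ) else 0)
        - (if i < m ∧ m < j ∧ w m < w i then 1 else 0)
        + (if i < m ∧ m < j ∧ w m < w j then 1 else 0)
        - (if i < m ∧ m < j ∧ w j < w m then 1 else 0))
      = 2 * (if i < m ∧ m < j ∧ w i < w m ∧ w m < w j then 1 else 0) := by
    intro m
    have hij' : i.val < j.val := hij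
    have hw' : (w i).val < (w j).val := hw
    simp only [Fin.lt_def]
    by_cases hm : i.val < m.val ∧ m.val < j.val
    · have h1 : (w m).val ≠ (w i).val := fun heq =>
        (by omega : m.val ≠ i.val) (congrArg Fin.val (w.injective (Fin.ext heq)))
      have h2 : (w m).val ≠ (w j).val := fun heq =>
        (by omega : m.val ≠ j.val) (congrArg Fin.val (w.injective (Fin.ext heq)))
      split_ifs <;> omega
    · split_ifs <;> omega
  have cid : ((Finset.univ.filter (fun m : Fin n => i < m ∧ m < j ∧ w i < w m)).card : ℤ)
        - ((Finset.univ.filter (fun m : Fin n => i < m ∧ m < j ∧ w m < w i)).card : ℤ)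
        + ((Finset.univ.filter (fun m : Fin n => i < m ∧ m < j ∧ w m < w j)).card : ℤ)
        - ((Finset.univ.filter (fun m : Fin n => i < m ∧ m < j ∧ w j < w m)).card : ℤ)
      = 2 * ((Finset.univ.filter
          (fun m : Fin n => i < m ∧ m < j ∧ w i < w m ∧ w m < w j)).card : ℤ) := by
    rw [cardz _ _, cardz _ _, cardz _ _, cardz _ _, cardz _ _, ← Finset.sum_sub_distrib,
      ← Finset.sum_add_distrib, ← Finset.sum_sub_distrib,
      Finset.sum_congr rfl (fun m _ => ptc m), ← Finset.mul_sum]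
  have keysum := key
  rw [Finset.sum_congr rfl (fun p _ => pw p), sums] at keysum
  linarith [cid, keysum]




lemma invNum_swap_desc {n : ℕ} (w : Equiv.Perm (Fin n)) (i j : Fin n) (hij : i < j)
    (hw : w j < w i) :
    (invNum (w * Equiv.swap i j) : ℤ) = invNum w - 1 -
      2 * ((Finset.univ.filter
        (fun m : Fin n => i < m ∧ m < j ∧ w j < w m ∧ w m < w i)).card : ℤ) := by
  set w' := w * Equiv.swap i j with hw'
  have hii : w' i = w j := by simp [hw', Equiv.Perm.mul_apply]
  have hjj : w' j = w i := by simp [hw', Equiv.Perm.mul_apply]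
  have hmid : ∀ m : Fin n, i < m → m < j → w' m = w m := by
    intro m h1 h2
    simp [hw', Equiv.Perm.mul_apply,
      Equiv.swap_apply_of_ne_of_ne (Fin.ne_of_gt h1) (Fin.ne_of_lt h2)]
  have hback : w' * Equiv.swap i j = w := by
    rw [hw', mul_assoc, Equiv.swap_mul_self, mul_one]
  have := invNum_swap_asc w' i j hij (by rw [hii, hjj]; exact hw)
  rw [hback] at this
  have hfe : (Finset.univ.filter
        (fun m : Fin n => i < m ∧ m < j ∧ w' i < w' m ∧ w' m < w' j))
      = (Finset.univ.filter
        (fun m : Fin n => i < m ∧ m < j ∧ w j < w m ∧ w m < w i)) := by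
    apply Finset.filter_congr
    intro m _
    constructor
    · rintro ⟨h1, h2, h3, h4⟩
      rw [hii] at h3
      rw [hjj] at h4
      rw [hmid m h1 h2] at h3 h4
      exact ⟨h1, h2, h3, h4⟩
    · rintro ⟨h1, h2, h3, h4⟩
      refine ⟨h1, h2, ?_, ?_⟩
      · rw [hii, hmid m h1 h2]; exact h3
      · rw [hjj, hmid m h1 h2]; exact h4
  rw [hfe] at this
  linarith

lemma card_filter_val_Ico {N lo hi : ℕ} (h : hi ≤ N) :
    (Finset.univ.filter (fun m : Fin N => lo ≤ m.val ∧ m.val < hi)).card = hi - lo := by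
  rw [← Nat.card_Ico lo hi]
  refine Finset.card_bij' (fun (m : Fin N) _ => m.val)
    (fun x hx => (⟨x, lt_of_lt_of_le (Finset.mem_Ico.mp hx).2 h⟩ : Fin N)) ?_ ?_ ?_ ?_ <;>
    intro y hy <;> simp at hy ⊢ <;> omega

/-- `cntP w K x = #{m < K : w(m) < x}` as an integer. -/
def cntP {n : ℕ} (w : Equiv.Perm (Fin n)) (K x : ℕ) : ℤ :=
  ((Finset.univ.filter (fun m : Fin n => m.val < K ∧ (w m).val < x)).card : ℤ)

lemma cntP_eq_sum {n : ℕ} (w : Equiv.Perm (Fin n)) (K x : ℕ) :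
    cntP w K x = ∑ m : Fin n, (if m.val < K ∧ (w m).val < x then (1:ℤ) else 0) := by
  rw [cntP, Finset.card_filter]; push_cast; rfl

lemma cntP_zero {n : ℕ} (w : Equiv.Perm (Fin n)) (K : ℕ) : cntP w K 0 = 0 := by
  rw [cntP_eq_sum]
  apply Finset.sum_eq_zero
  intro m _
  simp

lemma sum_two {n : ℕ} (i j : Fin n) (hij : i ≠ j) (A B : ℤ) :
    ∑ m : Fin n, (if m = i then A else if m = j then B else 0) = A + B := by
  have hpt : ∀ m : Fin n, (if m = i then A else if m = j then B else 0)
      = (if m = i then A else 0) + (if m = j then B else 0) := by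
    intro m
    split_ifs with h1 h2
    · exact absurd (h1.symm.trans h2) hij
    · omega
    · omega
    · omega
  rw [Finset.sum_congr rfl (fun m _ => hpt m), Finset.sum_add_distrib,
    Finset.sum_ite_eq' Finset.univ i (fun _ => A),
    Finset.sum_ite_eq' Finset.univ j (fun _ => B)]
  simp

lemma cntP_swap_reindex {n : ℕ} (w : Equiv.Perm (Fin n)) (i j : Fin n) (K x : ℕ) :
    cntP (w * Equiv.swap i j) K x
      = ∑ m : Fin n, (if ((Equiv.swap i j) m).val < K ∧ ((w m)).val < x then (1:ℤ) else 0) := by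
  rw [cntP_eq_sum]
  rw [← Equiv.sum_comp (Equiv.swap i j)
    (fun m : Fin n => if m.val < K ∧ ((w * Equiv.swap i j) m).val < x then (1:ℤ) else 0)]
  apply Finset.sum_congr rfl
  intro m _
  simp [Equiv.Perm.mul_apply, Equiv.swap_apply_self]

lemma cntP_swap_diff {n : ℕ} (w : Equiv.Perm (Fin n)) (i j : Fin n) (hij : i ≠ j) (K x : ℕ) :
    cntP (w * Equiv.swap i j) K x - cntP w K x
      = ((if j.val < K ∧ (w i).val < x then (1:ℤ) else 0)
          - (if i.val < K ∧ (w i).val < x then 1 else 0))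
        + ((if i.val < K ∧ (w j).val < x then (1:ℤ) else 0)
          - (if j.val < K ∧ (w j).val < x then 1 else 0)) := by
  rw [cntP_swap_reindex, cntP_eq_sum, ← Finset.sum_sub_distrib]
  have hpt : ∀ m : Fin n,
      ((if ((Equiv.swap i j) m).val < K ∧ (w m).val < x then (1:ℤ) else 0)
        - (if m.val < K ∧ (w m).val < x then 1 else 0))
      = (if m = i then ((if j.val < K ∧ (w i).val < x then (1:ℤ) else 0)
          - (if i.val < K ∧ (w i).val < x then 1 else 0))
        else if m = j then ((if i.val < K ∧ (w j).val < x then (1:ℤ) else 0)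
          - (if j.val < K ∧ (w j).val < x then 1 else 0)) else 0) := by
    intro m
    rcases eq_or_ne m i with rfl | hmi
    · rw [Equiv.swap_apply_left, if_pos rfl]
    · rcases eq_or_ne m j with rfl | hmj
      · rw [Equiv.swap_apply_right, if_neg hmi, if_pos rfl]
      · rw [Equiv.swap_apply_of_ne_of_ne hmi hmj, if_neg hmi, if_neg hmj, sub_self]
  rw [Finset.sum_congr rfl (fun m _ => hpt m), sum_two i j hij]

lemma cntP_swap_out {n : ℕ} (w : Equiv.Perm (Fin n)) (i j : Fin n) (hij : i ≠ j) (K x : ℕ)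
    (hK : (K ≤ i.val ∧ K ≤ j.val) ∨ (i.val < K ∧ j.val < K)) :
    cntP (w * Equiv.swap i j) K x = cntP w K x := by
  have := cntP_swap_diff w i j hij K x
  have h1 : (j.val < K ∧ (w i).val < x) ↔ (i.val < K ∧ (w i).val < x) := by
    constructor <;> (rintro ⟨h', h''⟩; exact ⟨by omega, h''⟩)
  have h2 : (i.val < K ∧ (w j).val < x) ↔ (j.val < K ∧ (w j).val < x) := by
    constructor <;> (rintro ⟨h', h''⟩; exact ⟨by omega, h''⟩)
  rw [if_congr h1 rfl rfl, if_congr h2 rfl rfl] at this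
  omega

lemma cntP_swap_mid {n : ℕ} (w : Equiv.Perm (Fin n)) (i j : Fin n) (hij : i < j) (K x : ℕ)
    (hK1 : i.val < K) (hK2 : K ≤ j.val) :
    cntP (w * Equiv.swap i j) K x = cntP w K x
      - (if (w i).val < x then 1 else 0) + (if (w j).val < x then 1 else 0) := by
  have := cntP_swap_diff w i j (Fin.ne_of_lt hij) K x
  have h1 : ¬ (j.val < K ∧ (w i).val < x) := by omega
  have h2 : (i.val < K ∧ (w i).val < x) ↔ ((w i).val < x) := by
    constructor
    · exact fun h => h.2
    · exact fun h => ⟨hK1, h⟩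
  have h3 : (i.val < K ∧ (w j).val < x) ↔ ((w j).val < x) :=
    ⟨fun h => h.2, fun h => ⟨hK1, h⟩⟩
  have h4 : ¬ (j.val < K ∧ (w j).val < x) := by omega
  rw [if_neg h1, if_neg h4, if_congr h2 rfl rfl, if_congr h3 rfl rfl] at this
  omega

lemma cardIoo {n : ℕ} (i j : Fin n) (hij : i < j) :
    ((Finset.univ.filter (fun m : Fin n => i < m ∧ m < j)).card : ℤ)
      = (j.val : ℤ) - i.val - 1 := by
  have : (Finset.univ.filter (fun m : Fin n => i < m ∧ m < j))
      = (Finset.univ.filter (fun m : Fin n => i.val + 1 ≤ m.val ∧ m.val < j.val)) := by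
    apply Finset.filter_congr
    intro m _
    rw [Fin.lt_def, Fin.lt_def]
    omega
  rw [this, card_filter_val_Ico (le_of_lt j.isLt)]
  have : i.val < j.val := hij
  omega

lemma edge_desc {n : ℕ} {u u' : Equiv.Perm (Fin n)} {c : Fin (n-1) → ℤ}
    (h : qbEdgeWt u u' c) :
    ∃ i j : Fin n, i < j ∧ u' = u * Equiv.swap i j ∧
      ((u i < u j ∧ c = 0 ∧ invNum u' = invNum u + 1) ∨
       (u j < u i ∧ (c = fun m => if i.val ≤ m.val ∧ m.val < j.val then 1 else 0)
         ∧ invNum u' + 2 * (j.val - i.val) = invNum u + 1)) := by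
  obtain ⟨i, j, hij, hue, hcase⟩ := h
  refine ⟨i, j, hij, hue, ?_⟩
  have htri : u i < u j ∨ u j < u i := by
    rcases lt_trichotomy (u i) (u j) with h | h | h
    · exact Or.inl h
    · exact absurd (u.injective h) (Fin.ne_of_lt hij)
    · exact Or.inr h
  have hd : i.val < j.val := hij
  rcases hcase with ⟨heq, hc⟩ | ⟨heq, hc⟩
  · left
    refine ⟨?_, hc, heq⟩
    rcases htri with h | h
    · exact h
    · exfalso
      have := invNum_swap_desc u i j hij h
      rw [← hue] at this
      have hcast : (invNum u' : ℤ) = (invNum u : ℤ) + 1 := by exact_mod_cast congrArg (fun t : ℕ => (t : ℤ)) heq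
      have hcard : (0:ℤ) ≤ ((Finset.univ.filter
        (fun m : Fin n => i < m ∧ m < j ∧ u j < u m ∧ u m < u i)).card : ℤ) := Int.ofNat_nonneg _
      omega
  · right
    refine ⟨?_, hc, heq⟩
    rcases htri with h | h
    · exfalso
      have := invNum_swap_asc u i j hij h
      rw [← hue] at this
      have hcast : (invNum u' : ℤ) + 2 * ((j.val : ℤ) - i.val) = (invNum u : ℤ) + 1 := by
        have h2 := congrArg (fun t : ℕ => (t : ℤ)) heq
        push_cast [Nat.cast_sub (le_of_lt hd)] at h2
        omega
      have hcard : (0:ℤ) ≤ ((Finset.univ.filter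
        (fun m : Fin n => i < m ∧ m < j ∧ u i < u m ∧ u m < u j)).card : ℤ) := Int.ofNat_nonneg _
      omega
    · exact h

lemma edge_bruhat {n : ℕ} (u : Equiv.Perm (Fin n)) (i j : Fin n) (hij : i < j)
    (hval : u i < u j) (hmid : ∀ m : Fin n, i < m → m < j → ¬(u i < u m ∧ u m < u j)) :
    qbEdgeWt u (u * Equiv.swap i j) 0 := by
  refine ⟨i, j, hij, rfl, Or.inl ⟨?_, rfl⟩⟩
  have hcard : (Finset.univ.filter
      (fun m : Fin n => i < m ∧ m < j ∧ u i < u m ∧ u m < u j)).card = 0 := by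
    rw [Finset.card_eq_zero, Finset.filter_eq_empty_iff]
    rintro m _ ⟨h1, h2, h3, h4⟩
    exact hmid m h1 h2 ⟨h3, h4⟩
  have := invNum_swap_asc u i j hij hval
  rw [hcard] at this
  have : (invNum (u * Equiv.swap i j) : ℤ) = (invNum u : ℤ) + 1 := by push_cast at this ⊢; omega
  exact_mod_cast this

lemma edge_quantum {n : ℕ} (u : Equiv.Perm (Fin n)) (i j : Fin n) (hij : i < j)
    (hval : u j < u i) (hmid : ∀ m : Fin n, i < m → m < j → (u j < u m ∧ u m < u i)) :
    qbEdgeWt u (u * Equiv.swap i j)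
      (fun m => if i.val ≤ m.val ∧ m.val < j.val then 1 else 0) := by
  refine ⟨i, j, hij, rfl, Or.inr ⟨?_, rfl⟩⟩
  have hfe : (Finset.univ.filter
      (fun m : Fin n => i < m ∧ m < j ∧ u j < u m ∧ u m < u i))
      = (Finset.univ.filter (fun m : Fin n => i < m ∧ m < j)) := by
    apply Finset.filter_congr
    intro m _
    constructor
    · rintro ⟨h1, h2, _⟩; exact ⟨h1, h2⟩
    · rintro ⟨h1, h2⟩; exact ⟨h1, h2, hmid m h1 h2⟩
  have := invNum_swap_desc u i j hij hval
  rw [hfe, cardIoo i j hij] at this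
  have hd : i.val < j.val := hij
  have hgoal : (invNum (u * Equiv.swap i j) : ℤ) + 2 * ((j.val:ℤ) - i.val)
      = (invNum u : ℤ) + 1 := by omega
  have : invNum (u * Equiv.swap i j) + 2 * (j.val - i.val) = invNum u + 1 := by
    have hcast : ((invNum (u * Equiv.swap i j) + 2 * (j.val - i.val) : ℕ) : ℤ)
        = ((invNum u + 1 : ℕ) : ℤ) := by
      push_cast [Nat.cast_sub (le_of_lt hd)]
      omega
    exact_mod_cast hcast
  exact this

/-- depth function -/
def depP {n : ℕ} (u v : Equiv.Perm (Fin n)) (K : ℕ) : ℤ :=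
  (Finset.range (n+1)).sup' Finset.nonempty_range_add_one
    (fun x => cntP v K x - cntP u K x)

lemma le_depP {n : ℕ} (u v : Equiv.Perm (Fin n)) (K x : ℕ) (hx : x ≤ n) :
    cntP v K x - cntP u K x ≤ depP u v K :=
  Finset.le_sup' (fun x => cntP v K x - cntP u K x)
    (Finset.mem_range.mpr (Nat.lt_succ_of_le hx))

lemma depP_nonneg {n : ℕ} (u v : Equiv.Perm (Fin n)) (K : ℕ) : 0 ≤ depP u v K := by
  have := le_depP u v K 0 (by omega)
  rw [cntP_zero, cntP_zero] at this
  omega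

lemma depP_self {n : ℕ} (v : Equiv.Perm (Fin n)) (K : ℕ) : depP v v K = 0 := by
  refine le_antisymm ?_ (depP_nonneg v v K)
  apply Finset.sup'_le
  intro x _
  omega

lemma exists_depP {n : ℕ} (u v : Equiv.Perm (Fin n)) (K : ℕ) :
    ∃ x ≤ n, depP u v K = cntP v K x - cntP u K x := by
  obtain ⟨x, hx, he⟩ := Finset.exists_mem_eq_sup' (Finset.nonempty_range_add_one)
    (fun x => cntP v K x - cntP u K x)
  exact ⟨x, by have := Finset.mem_range.mp hx; omega, he⟩

lemma depP_le_edge {n : ℕ} {u u' : Equiv.Perm (Fin n)} {c : Fin (n-1) → ℤ}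
    (v : Equiv.Perm (Fin n)) (h : qbEdgeWt u u' c) (k : Fin (n-1)) :
    depP u v (k.val+1) ≤ c k + depP u' v (k.val+1) := by
  obtain ⟨i, j, hij, hue, hcase⟩ := edge_desc h
  have hd : i.val < j.val := hij
  apply Finset.sup'_le
  intro x hx
  have hx' : x ≤ n := by have := Finset.mem_range.mp hx; omega
  have hkey : cntP u' (k.val+1) x ≤ c k + cntP u (k.val+1) x := by
    rcases hcase with ⟨hval, hc, _⟩ | ⟨hval, hc, _⟩
    · have hc0 : c k = 0 := by rw [hc]; rfl
      rw [hc0, hue]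
      by_cases hmid : i.val < k.val + 1 ∧ k.val + 1 ≤ j.val
      · rw [cntP_swap_mid u i j hij _ x hmid.1 hmid.2]
        have : (u i).val < (u j).val := hval
        split_ifs <;> omega
      · rw [cntP_swap_out u i j (Fin.ne_of_lt hij) _ x (by omega)]
        omega
    · rw [hc, hue]
      simp only []
      by_cases hmid : i.val ≤ k.val ∧ k.val < j.val
      · rw [if_pos hmid, cntP_swap_mid u i j hij _ x (by omega) (by omega)]
        split_ifs <;> omega
      · rw [if_neg hmid, cntP_swap_out u i j (Fin.ne_of_lt hij) _ x (by omega)]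
        omega
  have := le_depP u' v (k.val+1) x hx'
  omega

lemma depP_le_path {n : ℕ} {u v : Equiv.Perm (Fin n)} {len : ℕ} {c : Fin (n-1) → ℤ}
    (h : qbPathWt u v len c) : ∀ k : Fin (n-1), depP u v (k.val+1) ≤ c k := by
  induction h with
  | refl u => intro k; rw [depP_self]; rfl
  | @step u w v' len c0 c1 hedge htail ih =>
    intro k
    have h1 := depP_le_edge v' hedge k
    have h2 := ih k
    simp only [Pi.add_apply]
    omega

lemma sumWt {n : ℕ} (i j : Fin n) (hij : i < j) :
    (∑ k : Fin (n-1), (if i.val ≤ k.val ∧ k.val < j.val then (1:ℤ) else 0))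
      = (j.val : ℤ) - i.val := by
  have h1 : (∑ k : Fin (n-1), (if i.val ≤ k.val ∧ k.val < j.val then (1:ℤ) else 0))
      = ((Finset.univ.filter (fun k : Fin (n-1) => i.val ≤ k.val ∧ k.val < j.val)).card : ℤ) := by
    rw [Finset.card_filter]; push_cast; rfl
  have hd : i.val < j.val := hij
  have hjn : j.val ≤ n - 1 := by have := j.isLt; omega
  rw [h1, card_filter_val_Ico hjn]
  omega

lemma edge_inv {n : ℕ} {u u' : Equiv.Perm (Fin n)} {c : Fin (n-1) → ℤ}
    (h : qbEdgeWt u u' c) :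
    (invNum u' : ℤ) = invNum u + 1 - 2 * ∑ k : Fin (n-1), c k := by
  obtain ⟨i, j, hij, hue, hcase⟩ := edge_desc h
  have hd : i.val < j.val := hij
  rcases hcase with ⟨hval, hc, heq⟩ | ⟨hval, hc, heq⟩
  · rw [hc]
    simp only [Pi.zero_apply, Finset.sum_const_zero, mul_zero, sub_zero]
    exact_mod_cast congrArg (fun t : ℕ => (t:ℤ)) heq
  · rw [hc, sumWt i j hij]
    have h2 := congrArg (fun t : ℕ => (t : ℤ)) heq
    push_cast [Nat.cast_sub (le_of_lt hd)] at h2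
    omega

lemma path_inv {n : ℕ} {u v : Equiv.Perm (Fin n)} {len : ℕ} {c : Fin (n-1) → ℤ}
    (h : qbPathWt u v len c) :
    (invNum v : ℤ) = invNum u + len - 2 * ∑ k : Fin (n-1), c k := by
  induction h with
  | refl u => simp
  | step hedge _ ih =>
    have h1 := edge_inv hedge
    rw [ih]
    simp only [Pi.add_apply, Finset.sum_add_distrib]
    push_cast
    omega

/-- The key counting estimate: under the greedy hypotheses, the threshold `b+1`
beats the threshold `x` by at least one. -/
lemma core {n : ℕ} (u v : Equiv.Perm (Fin n)) (r : Fin n) (K x : ℕ)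
    (hlow : ∀ m : Fin n, m < r → u m = v m)
    (hrK : r.val < K)
    (hx1 : x ≤ (v r).val → ((u r).val < x ∨ (v r).val < (u r).val))
    (hx2 : (v r).val < x → ((v r).val < (u r).val ∧ (u r).val < x))
    (hm : ∀ m : Fin n, r < m → m.val < K →
       (x ≤ (v r).val → ¬(x ≤ (u m).val ∧ (u m).val ≤ (v r).val)) ∧
       ((v r).val < x → ((v r).val < (u m).val ∧ (u m).val < x))) :
    cntP v K x - cntP u K x + 1 ≤ cntP v K ((v r).val + 1) - cntP u K ((v r).val + 1) := by
  have hsum : ∀ w : Equiv.Perm (Fin n), ∀ y : ℕ, cntP w K y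
      = ∑ m : Fin n, (if m.val < K ∧ (w m).val < y then (1:ℤ) else 0) := fun w y => cntP_eq_sum w K y
  rw [hsum, hsum, hsum, hsum]
  set φ : Fin n → ℤ := fun m =>
    (if m.val < K ∧ (v m).val < (v r).val + 1 then (1:ℤ) else 0)
    - (if m.val < K ∧ (u m).val < (v r).val + 1 then 1 else 0)
    - (if m.val < K ∧ (v m).val < x then 1 else 0)
    + (if m.val < K ∧ (u m).val < x then 1 else 0) with hφ
  have htot : ∑ m : Fin n, φ m
      = (∑ m : Fin n, (if m.val < K ∧ (v m).val < (v r).val + 1 then (1:ℤ) else 0))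
      - (∑ m : Fin n, (if m.val < K ∧ (u m).val < (v r).val + 1 then (1:ℤ) else 0))
      - (∑ m : Fin n, (if m.val < K ∧ (v m).val < x then (1:ℤ) else 0))
      + (∑ m : Fin n, (if m.val < K ∧ (u m).val < x then (1:ℤ) else 0)) := by
    rw [hφ, Finset.sum_add_distrib, Finset.sum_sub_distrib, Finset.sum_sub_distrib]
  have hr1 : 1 ≤ φ r := by
    rw [hφ]
    simp only []
    rcases le_or_gt x (v r).val with hc | hc
    · rcases hx1 hc with h | h <;> split_ifs <;> omega
    · obtain ⟨h1, h2⟩ := hx2 hc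
      split_ifs <;> omega
  have hm0 : ∀ m : Fin n, m ≠ r → 0 ≤ φ m := by
    intro m hmr
    rw [hφ]
    simp only []
    rcases lt_trichotomy m r with hlt | heq | hgt
    · rw [hlow m hlt]
      split_ifs <;> omega
    · exact absurd heq hmr
    · by_cases hK : m.val < K
      · have := hm m hgt hK
        rcases le_or_gt x (v r).val with hc | hc
        · have h1 := this.1 hc
          split_ifs <;> omega
        · have h2 := this.2 hc
          split_ifs <;> omega
      · split_ifs <;> omega
  have hsplit : ∑ m : Fin n, φ m = φ r + ∑ m ∈ Finset.univ.erase r, φ m :=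
    (Finset.add_sum_erase Finset.univ φ (Finset.mem_univ r)).symm
  have hpos : 0 ≤ ∑ m ∈ Finset.univ.erase r, φ m :=
    Finset.sum_nonneg (fun m hm' => hm0 m (Finset.ne_of_mem_erase hm'))
  have : 1 ≤ ∑ m : Fin n, φ m := by omega
  omega

lemma depP_swap_out {n : ℕ} (u v : Equiv.Perm (Fin n)) (i j : Fin n) (hij : i ≠ j) (K : ℕ)
    (hK : (K ≤ i.val ∧ K ≤ j.val) ∨ (i.val < K ∧ j.val < K)) :
    depP (u * Equiv.swap i j) v K = depP u v K := by
  unfold depP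
  apply Finset.sup'_congr _ rfl
  intro x _
  rw [cntP_swap_out u i j hij K x hK]

lemma depP_bruhat_aff {n : ℕ} (u v : Equiv.Perm (Fin n)) (i j : Fin n) (hij : i < j)
    (hval : u i < u j) (K : ℕ) (hK1 : i.val < K) (hK2 : K ≤ j.val)
    (hstrip : ∀ x, x ≤ n → (u i).val < x → x ≤ (u j).val →
      cntP v K x - cntP u K x + 1 ≤ depP u v K) :
    depP (u * Equiv.swap i j) v K = depP u v K := by
  have hv : (u i).val < (u j).val := hval
  have hmid : ∀ x : ℕ, cntP (u * Equiv.swap i j) K x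
      = cntP u K x - (if (u i).val < x then 1 else 0) + (if (u j).val < x then 1 else 0) :=
    fun x => cntP_swap_mid u i j hij K x hK1 hK2
  apply le_antisymm
  · apply Finset.sup'_le
    intro x hx
    have hxn : x ≤ n := by have := Finset.mem_range.mp hx; omega
    rw [hmid x]
    by_cases hs : (u i).val < x ∧ x ≤ (u j).val
    · have := hstrip x hxn hs.1 hs.2
      split_ifs <;> omega
    · have := le_depP u v K x hxn
      split_ifs <;> omega
  · apply Finset.sup'_le
    intro x hx
    have hxn : x ≤ n := by have := Finset.mem_range.mp hx; omega
    have h2 : cntP v K x - cntP (u * Equiv.swap i j) K x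
        ≤ depP (u * Equiv.swap i j) v K := le_depP _ v K x hxn
    rw [hmid x] at h2
    split_ifs at h2 <;> omega

lemma depP_quantum_aff {n : ℕ} (u v : Equiv.Perm (Fin n)) (i j : Fin n) (hij : i < j)
    (hval : u j < u i) (K : ℕ) (hK1 : i.val < K) (hK2 : K ≤ j.val)
    (hoff : ∀ x, x ≤ n → ¬((u j).val < x ∧ x ≤ (u i).val) →
      cntP v K x - cntP u K x + 1 ≤ depP u v K) :
    depP (u * Equiv.swap i j) v K = depP u v K - 1 := by
  have hv : (u j).val < (u i).val := hval
  have hmid : ∀ x : ℕ, cntP (u * Equiv.swap i j) K x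
      = cntP u K x - (if (u i).val < x then 1 else 0) + (if (u j).val < x then 1 else 0) :=
    fun x => cntP_swap_mid u i j hij K x hK1 hK2
  apply le_antisymm
  · apply Finset.sup'_le
    intro x hx
    have hxn : x ≤ n := by have := Finset.mem_range.mp hx; omega
    rw [hmid x]
    by_cases hs : (u j).val < x ∧ x ≤ (u i).val
    · have := le_depP u v K x hxn
      split_ifs <;> omega
    · have := hoff x hxn hs
      split_ifs <;> omega
  · obtain ⟨x, hxn, hxe⟩ := exists_depP u v K
    by_cases hs : (u j).val < x ∧ x ≤ (u i).val
    · have h2 : cntP v K x - cntP (u * Equiv.swap i j) K x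
          ≤ depP (u * Equiv.swap i j) v K := le_depP _ v K x hxn
      have h3 := hmid x
      rw [h3] at h2
      split_ifs at h2 <;> omega
    · have := hoff x hxn hs
      omega

lemma greedy {n : ℕ} (u v : Equiv.Perm (Fin n)) (hne : u ≠ v) :
    ∃ (u' : Equiv.Perm (Fin n)) (c : Fin (n-1) → ℤ), qbEdgeWt u u' c ∧
      ∀ k : Fin (n-1), depP u' v (k.val+1) = depP u v (k.val+1) - c k := by
  classical
  have hexist : (Finset.univ.filter (fun m : Fin n => u m ≠ v m)).Nonempty := by
    rw [Finset.filter_nonempty_iff]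
    by_contra h
    push_neg at h
    exact hne (Equiv.ext (fun m => h m (Finset.mem_univ m)))
  set r := Finset.min' _ hexist with hrdef
  have hrmem : u r ≠ v r := by
    have := Finset.min'_mem _ hexist
    rw [Finset.mem_filter] at this
    exact this.2
  have hlow : ∀ m : Fin n, m < r → u m = v m := by
    intro m hm
    by_contra hc
    exact absurd (Finset.min'_le _ m (Finset.mem_filter.mpr ⟨Finset.mem_univ m, hc⟩))
      (not_le.mpr hm)
  have hpvr : u (u.symm (v r)) = v r := u.apply_symm_apply (v r)
  have hrp : r < u.symm (v r) := by
    rcases lt_trichotomy (u.symm (v r)) r with h | h | h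
    · exfalso
      have h2 := hlow _ h
      rw [hpvr] at h2
      exact absurd (v.injective h2.symm) (Fin.ne_of_lt h)
    · exfalso
      apply hrmem
      rw [← h, hpvr, h]
    · exact h
  have hbn : (v r).val < n := (v r).isLt
  rcases lt_trichotomy ((u r).val) ((v r).val) with hab | hab | hab
  · -- CASE A : u r < v r, Bruhat raise
    set SA := Finset.univ.filter
      (fun m : Fin n => r < m ∧ (u r).val < (u m).val ∧ (u m).val ≤ (v r).val) with hSAdef
    have hSAne : SA.Nonempty := by
      refine ⟨u.symm (v r), Finset.mem_filter.mpr ⟨Finset.mem_univ _, hrp, ?_, ?_⟩⟩ <;>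
        rw [hpvr] <;> omega
    set j := SA.min' hSAne with hjdef
    have hjmem : r < j ∧ (u r).val < (u j).val ∧ (u j).val ≤ (v r).val := by
      have := Finset.min'_mem _ hSAne
      rw [Finset.mem_filter] at this
      exact this.2
    have hrj : r.val < j.val := hjmem.1
    have hjmin : ∀ m : Fin n, r < m → (u r).val < (u m).val → (u m).val ≤ (v r).val →
        j ≤ m := by
      intro m h1 h2 h3
      exact Finset.min'_le _ m (Finset.mem_filter.mpr ⟨Finset.mem_univ m, h1, h2, h3⟩)
    have hmidA : ∀ m : Fin n, r < m → m < j → ¬(u r < u m ∧ u m < u j) := by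
      rintro m h1 h2 ⟨g1, g2⟩
      have g1' : (u r).val < (u m).val := g1
      have g2' : (u m).val < (u j).val := g2
      exact absurd (hjmin m h1 g1' (by omega)) (not_le.mpr h2)
    have hedge := edge_bruhat u r j hjmem.1 (by exact hjmem.2.1) hmidA
    refine ⟨u * Equiv.swap r j, 0, hedge, ?_⟩
    intro k
    simp only [Pi.zero_apply, sub_zero]
    by_cases hAff : r.val < k.val + 1 ∧ k.val + 1 ≤ j.val
    · apply depP_bruhat_aff u v r j hjmem.1 (by exact hjmem.2.1) _ hAff.1 hAff.2
      intro x hxn hx1 hx2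
      have hcore := core u v r (k.val+1) x hlow hAff.1
        (fun _ => Or.inl hx1)
        (fun h => absurd h (by omega))
        ?_
      · have hfin := le_depP u v (k.val+1) ((v r).val + 1) (by omega)
        omega
      · intro m h1 h2
        have hmj : m < j := by
          rw [Fin.lt_def]
          omega
        have hnot : ¬(r < m ∧ (u r).val < (u m).val ∧ (u m).val ≤ (v r).val) := by
          intro hc
          exact absurd (Finset.min'_le _ m (Finset.mem_filter.mpr ⟨Finset.mem_univ m, hc⟩))
            (not_le.mpr hmj)
        have hmr : (u m).val ≠ (u r).val := fun hc =>
          (Fin.ne_of_gt h1) (u.injective (Fin.ext hc))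
        constructor
        · intro hxb
          rintro ⟨g1, g2⟩
          exact hnot ⟨h1, by omega, by omega⟩
        · intro hbx
          exact absurd hbx (by omega)
    · rw [depP_swap_out u v r j (Fin.ne_of_lt hjmem.1) _ (by omega)]
  · exact absurd (Fin.ext hab) hrmem
  · -- CASE B : v r < u r
    set SB0 := Finset.univ.filter
      (fun m : Fin n => r < m ∧ (u m).val ≤ (v r).val) with hSB0def
    have hSB0ne : SB0.Nonempty := by
      refine ⟨u.symm (v r), Finset.mem_filter.mpr ⟨Finset.mem_univ _, hrp, ?_⟩⟩
      rw [hpvr]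
    set j0 := SB0.min' hSB0ne with hj0def
    have hj0mem : r < j0 ∧ (u j0).val ≤ (v r).val := by
      have := Finset.min'_mem _ hSB0ne
      rw [Finset.mem_filter] at this
      exact this.2
    have hrj0 : r.val < j0.val := hj0mem.1
    have hj0min : ∀ m : Fin n, r < m → m < j0 → (v r).val < (u m).val := by
      intro m h1 h2
      by_contra hc
      exact absurd (Finset.min'_le _ m (Finset.mem_filter.mpr
        ⟨Finset.mem_univ m, h1, by omega⟩)) (not_le.mpr h2)
    by_cases hall : ∀ m : Fin n, r < m → m < j0 → (u m).val < (u r).val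
    · -- CASE B1 : quantum step to j0
      have hedge := edge_quantum u r j0 hj0mem.1 (by rw [Fin.lt_def]; omega) ?_
      · refine ⟨u * Equiv.swap r j0, _, hedge, ?_⟩
        intro k
        by_cases hAff : r.val ≤ k.val ∧ k.val < j0.val
        · rw [if_pos hAff]
          apply depP_quantum_aff u v r j0 hj0mem.1 (by rw [Fin.lt_def]; omega) _
            (by omega) (by omega)
          intro x hxn hs
          have hcore := core u v r (k.val+1) x hlow (by omega)
            (fun _ => Or.inr (by omega))
            (fun h => ⟨by omega, by omega⟩)
            ?_
          · have hfin := le_depP u v (k.val+1) ((v r).val + 1) (by omega)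
            omega
          · intro m h1 h2
            have hmj0 : m < j0 := by rw [Fin.lt_def]; omega
            have g1 := hj0min m h1 hmj0
            have g2 := hall m h1 hmj0
            constructor
            · intro hxb; omega
            · intro hbx
              refine ⟨g1, by omega⟩
        · rw [if_neg hAff, depP_swap_out u v r j0 (Fin.ne_of_lt hj0mem.1) _ (by omega),
            sub_zero]
      · intro m h1 h2
        have g1 := hj0min m h1 h2
        have g2 := hall m h1 h2
        constructor <;> rw [Fin.lt_def] <;> omega
    · -- CASE B2 : Bruhat raise to j1
      push_neg at hall
      obtain ⟨m0, hm0r, hm0j0, hm0a⟩ := hall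
      have hm0a' : (u r).val < (u m0).val := by
        have : (u m0).val ≠ (u r).val := fun hc =>
          (Fin.ne_of_gt hm0r) (u.injective (Fin.ext hc))
        omega
      set SB1 := Finset.univ.filter
        (fun m : Fin n => r < m ∧ (u r).val < (u m).val) with hSB1def
      have hSB1ne : SB1.Nonempty :=
        ⟨m0, Finset.mem_filter.mpr ⟨Finset.mem_univ _, hm0r, hm0a'⟩⟩
      set j1 := SB1.min' hSB1ne with hj1def
      have hj1mem : r < j1 ∧ (u r).val < (u j1).val := by
        have := Finset.min'_mem _ hSB1ne
        rw [Finset.mem_filter] at this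
        exact this.2
      have hrj1 : r.val < j1.val := hj1mem.1
      have hj1m0 : j1 ≤ m0 :=
        Finset.min'_le _ m0 (Finset.mem_filter.mpr ⟨Finset.mem_univ _, hm0r, hm0a'⟩)
      have hj1j0 : j1.val < j0.val := by
        have h1 : j1.val ≤ m0.val := hj1m0
        have h2 : m0.val < j0.val := hm0j0
        omega
      have hmidB : ∀ m : Fin n, r < m → m < j1 →
          (v r).val < (u m).val ∧ (u m).val < (u r).val := by
        intro m h1 h2
        have hmj0 : m < j0 := by rw [Fin.lt_def]; have : m.val < j1.val := h2; omega
        have g1 := hj0min m h1 hmj0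
        have g2 : ¬ ((u r).val < (u m).val) := by
          intro hc
          exact absurd (Finset.min'_le _ m (Finset.mem_filter.mpr
            ⟨Finset.mem_univ m, h1, hc⟩)) (not_le.mpr h2)
        have g3 : (u m).val ≠ (u r).val := fun hc =>
          (Fin.ne_of_gt h1) (u.injective (Fin.ext hc))
        omega
      have hedge := edge_bruhat u r j1 hj1mem.1 (by rw [Fin.lt_def]; omega) ?_
      · refine ⟨u * Equiv.swap r j1, 0, hedge, ?_⟩
        intro k
        simp only [Pi.zero_apply, sub_zero]
        by_cases hAff : r.val < k.val + 1 ∧ k.val + 1 ≤ j1.val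
        · apply depP_bruhat_aff u v r j1 hj1mem.1 (by rw [Fin.lt_def]; omega) _
            hAff.1 hAff.2
          intro x hxn hx1 hx2
          have hcore := core u v r (k.val+1) x hlow hAff.1
            (fun h => absurd h (by omega))
            (fun _ => ⟨by omega, by omega⟩)
            ?_
          · have hfin := le_depP u v (k.val+1) ((v r).val + 1) (by omega)
            omega
          · intro m h1 h2
            have hmid := hmidB m h1 (by rw [Fin.lt_def]; omega)
            constructor
            · intro hxb; exact absurd hxb (by omega)
            · intro hbx; exact ⟨by omega, by omega⟩
        · rw [depP_swap_out u v r j1 (Fin.ne_of_lt hj1mem.1) _ (by omega)]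
      · rintro m h1 h2 ⟨g1, g2⟩
        have := hmidB m h1 h2
        have g1' : (u r).val < (u m).val := g1
        omega

lemma invNum_lt {n : ℕ} (hn : 1 ≤ n) (u : Equiv.Perm (Fin n)) : invNum u < n * n := by
  have h1 : (Finset.univ.filter
      (fun p : Fin n × Fin n => p.1 < p.2 ∧ u p.2 < u p.1)) ⊂ Finset.univ := by
    rw [Finset.ssubset_univ_iff, Ne, Finset.filter_eq_self]
    intro hall
    have := hall (⟨0, hn⟩, ⟨0, hn⟩) (Finset.mem_univ _)
    exact absurd this.1 (lt_irrefl _)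
  have h2 := Finset.card_lt_card h1
  rwa [Finset.card_univ, Fintype.card_prod, Fintype.card_fin] at h2

lemma sum_depP_nonneg {n : ℕ} (u v : Equiv.Perm (Fin n)) :
    0 ≤ ∑ k : Fin (n-1), depP u v (k.val+1) :=
  Finset.sum_nonneg (fun k _ => depP_nonneg u v (k.val+1))

lemma exists_good_path {n : ℕ} (hn : 1 ≤ n) (v : Equiv.Perm (Fin n)) :
    ∀ u : Equiv.Perm (Fin n), ∃ L : ℕ,
      qbPathWt u v L (fun k => depP u v (k.val+1)) ∧
      (L:ℤ) = invNum v - invNum u + 2 * ∑ k : Fin (n-1), depP u v (k.val+1) := by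
  suffices H : ∀ (N : ℕ) (u : Equiv.Perm (Fin n)),
      (n*n) * (∑ k : Fin (n-1), depP u v (k.val+1)).toNat + (n*n - invNum u) = N →
      ∃ L : ℕ, qbPathWt u v L (fun k => depP u v (k.val+1)) ∧
      (L:ℤ) = invNum v - invNum u + 2 * ∑ k : Fin (n-1), depP u v (k.val+1) by
    exact fun u => H _ u rfl
  intro N
  induction N using Nat.strong_induction_on with
  | _ N ih =>
    intro u hμ
    by_cases h : u = v
    · subst h
      refine ⟨0, ?_, by simp [depP_self]⟩
      have hz : (fun k : Fin (n-1) => depP u u (k.val+1)) = 0 := by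
        funext k
        rw [depP_self]
        rfl
      rw [hz]
      exact qbPathWt.refl u
    · obtain ⟨u', c, hedge, hdrop⟩ := greedy u v h
      have hinv := edge_inv hedge
      have hSdrop : ∑ k : Fin (n-1), depP u' v (k.val+1)
          = (∑ k : Fin (n-1), depP u v (k.val+1)) - ∑ k : Fin (n-1), c k := by
        rw [← Finset.sum_sub_distrib]
        exact Finset.sum_congr rfl (fun k _ => hdrop k)
      have hsc : (∑ k : Fin (n-1), c k = 0) ∨ (1 ≤ ∑ k : Fin (n-1), c k) := by
        obtain ⟨i, j, hij, _, hcase⟩ := edge_desc hedge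
        rcases hcase with ⟨_, hc, _⟩ | ⟨_, hc, _⟩
        · left; rw [hc]; simp
        · right; rw [hc, sumWt i j hij]
          have : i.val < j.val := hij
          omega
      have hS0 := sum_depP_nonneg u v
      have hS0' := sum_depP_nonneg u' v
      have hinvu := invNum_lt hn u
      have hinvu' := invNum_lt hn u'
      have hμ' : (n*n) * (∑ k : Fin (n-1), depP u' v (k.val+1)).toNat + (n*n - invNum u') < N := by
        rw [← hμ]
        have ht : ((∑ k : Fin (n-1), depP u v (k.val+1)).toNat : ℤ)
            = ∑ k : Fin (n-1), depP u v (k.val+1) := Int.toNat_of_nonneg hS0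
        have ht' : ((∑ k : Fin (n-1), depP u' v (k.val+1)).toNat : ℤ)
            = ∑ k : Fin (n-1), depP u' v (k.val+1) := Int.toNat_of_nonneg hS0'
        have hnn : 1 ≤ n * n := Nat.one_le_iff_ne_zero.mpr (by positivity)
        rcases hsc with hc | hc
        · have : invNum u' = invNum u + 1 := by omega
          have heqS : (∑ k : Fin (n-1), depP u' v (k.val+1)).toNat
              = (∑ k : Fin (n-1), depP u v (k.val+1)).toNat := by omega
          rw [heqS]
          omega
        · have hSd : (∑ k : Fin (n-1), depP u' v (k.val+1)).toNat + 1
              ≤ (∑ k : Fin (n-1), depP u v (k.val+1)).toNat := by omega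
          have hmul := Nat.mul_le_mul_left (n*n) hSd
          calc (n*n) * (∑ k : Fin (n-1), depP u' v (k.val+1)).toNat + (n*n - invNum u')
              ≤ (n*n) * (∑ k : Fin (n-1), depP u' v (k.val+1)).toNat + n*n := by omega
            _ = (n*n) * ((∑ k : Fin (n-1), depP u' v (k.val+1)).toNat + 1) := by ring
            _ ≤ (n*n) * (∑ k : Fin (n-1), depP u v (k.val+1)).toNat := hmul
            _ < (n*n) * (∑ k : Fin (n-1), depP u v (k.val+1)).toNat + (n*n - invNum u) := by
                omega
      obtain ⟨L', hpath', hform'⟩ := ih _ hμ' u' rfl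
      have hwt : (c + fun k : Fin (n-1) => depP u' v (k.val+1))
          = fun k : Fin (n-1) => depP u v (k.val+1) := by
        funext k
        have := hdrop k
        simp only [Pi.add_apply]
        omega
      refine ⟨L' + 1, ?_, ?_⟩
      · rw [← hwt]
        exact qbPathWt.step hedge hpath'
      · push_cast
        omega

lemma permSet_card {n : ℕ} (w : Equiv.Perm (Fin n)) (K x : ℕ) :
    (((permSet w K).filter (fun b => b.val < x)).card : ℤ) = cntP w K x := by
  rw [permSet, Finset.filter_image, Finset.card_image_of_injective _ w.injective,
    Finset.filter_filter, cntP]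

lemma depthAB_cast {n : ℕ} (u v : Equiv.Perm (Fin n)) (K : ℕ) :
    ((depthAB (permSet u K) (permSet v K) : ℕ) : ℤ) = depP u v K := by
  have hc : ∀ x : ℕ, (((permSet u K).filter (fun a => a.val < x)).card : ℤ) = cntP u K x :=
    permSet_card u K
  have hc' : ∀ x : ℕ, (((permSet v K).filter (fun b => b.val < x)).card : ℤ) = cntP v K x :=
    permSet_card v K
  apply le_antisymm
  · have h1 : depthAB (permSet u K) (permSet v K) ≤ (depP u v K).toNat := by
      apply Finset.sup_le
      intro x hx
      have hxn : x ≤ n := by have := Finset.mem_range.mp hx; omega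
      have h2 := le_depP u v K x hxn
      have h3 := hc x
      have h4 := hc' x
      have h5 := depP_nonneg u v K
      omega
    have h6 := depP_nonneg u v K
    omega
  · apply Finset.sup'_le
    intro x hx
    have h2 : ((permSet v K).filter (fun b => b.val < x)).card
        - ((permSet u K).filter (fun a => a.val < x)).card
        ≤ depthAB (permSet u K) (permSet v K) :=
      Finset.le_sup (f := fun x => ((permSet v K).filter (fun b => b.val < x)).card
        - ((permSet u K).filter (fun a => a.val < x)).card) hx
    have h3 := hc x
    have h4 := hc' x
    omega


end QBGAux

/-- Every minimal-length directed path from `u` to `v` in the quantum Bruhat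
graph has weight vector `(d_1,…,d_{n-1})` with `d_k = depth(u[k], v[k])`. -/
theorem weight_of_minimal_path (n : ℕ) (hn : 1 ≤ n) (u v : Equiv.Perm (Fin n))
    (len : ℕ) (c : Fin (n - 1) → ℤ)
    (hpath : qbPathWt u v len c) (hmin : len = qbDist u v) :
    c = fun k => (depthAB (permSet u (k.val + 1)) (permSet v (k.val + 1)) : ℤ) := by
  obtain ⟨L, hLpath, hLform⟩ := exists_good_path hn v u
  have hq : qbDist u v ≤ L := Nat.sInf_le ⟨_, hLpath⟩
  have hlenL : len ≤ L := hmin ▸ hq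
  have hlen := path_inv hpath
  have hsum : ∑ k : Fin (n-1), c k ≤ ∑ k : Fin (n-1), depP u v (k.val+1) := by
    have : (len : ℤ) ≤ L := by exact_mod_cast hlenL
    omega
  have hge : ∀ k : Fin (n-1), depP u v (k.val+1) ≤ c k := depP_le_path hpath
  have hall : ∀ k : Fin (n-1), c k = depP u v (k.val+1) := by
    by_contra hcon
    push_neg at hcon
    obtain ⟨k0, hk0⟩ := hcon
    have hk0' : depP u v (k0.val+1) < c k0 := lt_of_le_of_ne (hge k0) (Ne.symm hk0)
    have : ∑ k : Fin (n-1), depP u v (k.val+1) < ∑ k : Fin (n-1), c k := by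
      apply Finset.sum_lt_sum (fun k _ => hge k) ⟨k0, Finset.mem_univ k0, hk0'⟩
    omega
  funext k
  rw [hall k, ← depthAB_cast u v (k.val+1)]
end

section
/- Let n ≥ 1 and let τ ∈ S_n be the long cycle sending i to i+1 for i < n and n to 1. For all u, v ∈ S_n, there is a directed edge u → v in the quantum Bruhat graph Γ_n if and only if there is a directed edge τ·u → τ·v in Γ_n (i.e., left multiplication by τ is an automorphism of the unweighted quantum Bruhat graph). -/
private lemma swap_sorted {n : ℕ} (i j a b : Fin n) (hij : i < j) (hab : a < b)
    (hB : ¬((a = i ∧ b ≤ j) ∨ (b = j ∧ i ≤ a))) :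
    Equiv.swap i j a < Equiv.swap i j b ∧
      ¬((Equiv.swap i j a = i ∧ Equiv.swap i j b ≤ j) ∨
        (Equiv.swap i j b = j ∧ i ≤ Equiv.swap i j a)) := by
  push_neg at hB
  obtain ⟨hB1, hB2⟩ := hB
  rcases eq_or_ne a i with rfl | hai
  · have hbj : j < b := hB1 rfl
    rw [Equiv.swap_apply_left,
      Equiv.swap_apply_of_ne_of_ne (ne_of_gt (hij.trans hbj)) (ne_of_gt hbj)]
    refine ⟨hbj, ?_⟩
    rintro (⟨h, -⟩ | ⟨h, -⟩)
    · exact absurd h (ne_of_gt hij)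
    · exact absurd h (ne_of_gt hbj)
  · rcases eq_or_ne b j with rfl | hbj
    · have hia : a < i := hB2 rfl
      rw [Equiv.swap_apply_of_ne_of_ne hai (ne_of_lt (hia.trans hij)),
        Equiv.swap_apply_right]
      refine ⟨hia, ?_⟩
      rintro (⟨h, -⟩ | ⟨h, -⟩)
      · exact hai h
      · exact absurd h (ne_of_lt hij)
    · rcases eq_or_ne a j with rfl | haj
      · have hbi : b ≠ i := ne_of_gt (hij.trans hab)
        rw [Equiv.swap_apply_right, Equiv.swap_apply_of_ne_of_ne hbi hbj]
        refine ⟨hij.trans hab, ?_⟩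
        rintro (⟨-, h⟩ | ⟨h, -⟩)
        · exact absurd hab (not_lt.mpr h)
        · exact hbj h
      · rcases eq_or_ne b i with rfl | hbi
        · rw [Equiv.swap_apply_of_ne_of_ne hai haj, Equiv.swap_apply_left]
          refine ⟨hab.trans hij, ?_⟩
          rintro (⟨h, -⟩ | ⟨-, h⟩)
          · exact hai h
          · exact absurd hab (not_lt.mpr h)
        · rw [Equiv.swap_apply_of_ne_of_ne hai haj,
            Equiv.swap_apply_of_ne_of_ne hbi hbj]
          refine ⟨hab, ?_⟩
          rintro (⟨h, -⟩ | ⟨h, -⟩)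
          · exact hai h
          · exact hbj h

private lemma invNum_swap_bound {n : ℕ} (w : Equiv.Perm (Fin n)) (i j : Fin n) (hij : i < j) :
    invNum (w * Equiv.swap i j) + 1 ≤ invNum w + 2 * (j.val - i.val) := by
  classical
  set s := Equiv.swap i j with hs
  set B : Finset (Fin n × Fin n) :=
    Finset.univ.filter (fun p => p.1 < p.2 ∧ ((p.1 = i ∧ p.2 ≤ j) ∨ (p.2 = j ∧ i ≤ p.1)))
    with hBdef
  set A : Finset (Fin n × Fin n) :=
    Finset.univ.filter (fun p => p.1 < p.2 ∧ (w * s) p.2 < (w * s) p.1) with hAdef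
  set C : Finset (Fin n × Fin n) :=
    Finset.univ.filter (fun p => p.1 < p.2 ∧ w p.2 < w p.1) with hCdef
  have hmemB : ∀ p : Fin n × Fin n,
      p ∈ B ↔ p.1 < p.2 ∧ ((p.1 = i ∧ p.2 ≤ j) ∨ (p.2 = j ∧ i ≤ p.1)) := by
    intro p; simp [hBdef]
  have hsdiff : (A \ B).card = (C \ B).card := by
    apply Finset.card_bij' (fun p _ => (s p.1, s p.2)) (fun p _ => (s p.1, s p.2))
    · intro p hp
      rw [Finset.mem_sdiff] at hp ⊢
      obtain ⟨hpA, hpB⟩ := hp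
      rw [hAdef, Finset.mem_filter] at hpA
      obtain ⟨-, hlt, hinv⟩ := hpA
      rw [hmemB] at hpB
      have hB' : ¬((p.1 = i ∧ p.2 ≤ j) ∨ (p.2 = j ∧ i ≤ p.1)) := fun h => hpB ⟨hlt, h⟩
      obtain ⟨hslt, hsB⟩ := swap_sorted i j p.1 p.2 hij hlt hB'
      refine ⟨?_, ?_⟩
      · rw [hCdef, Finset.mem_filter]
        exact ⟨Finset.mem_univ _, hslt, hinv⟩
      · rw [hmemB]; exact fun h => hsB h.2
    · intro p hp
      rw [Finset.mem_sdiff] at hp ⊢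
      obtain ⟨hpC, hpB⟩ := hp
      rw [hCdef, Finset.mem_filter] at hpC
      obtain ⟨-, hlt, hinv⟩ := hpC
      rw [hmemB] at hpB
      have hB' : ¬((p.1 = i ∧ p.2 ≤ j) ∨ (p.2 = j ∧ i ≤ p.1)) := fun h => hpB ⟨hlt, h⟩
      obtain ⟨hslt, hsB⟩ := swap_sorted i j p.1 p.2 hij hlt hB'
      refine ⟨?_, ?_⟩
      · rw [hAdef, Finset.mem_filter]
        refine ⟨Finset.mem_univ _, hslt, ?_⟩
        simpa [hs, Equiv.Perm.mul_apply, Equiv.swap_apply_self] using hinv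
      · rw [hmemB]; exact fun h => hsB h.2
    · intro p _; simp [hs, Equiv.swap_apply_self]
    · intro p _; simp [hs, Equiv.swap_apply_self]
  have hcardB : B.card + 1 = 2 * (j.val - i.val) := by
    have hXY : B = (Finset.Ioc i j).image (fun b => (i, b)) ∪
        (Finset.Ico i j).image (fun a => (a, j)) := by
      ext p
      rw [hmemB, Finset.mem_union]
      simp only [Finset.mem_image, Finset.mem_Ioc, Finset.mem_Ico, Prod.ext_iff]
      constructor
      · rintro ⟨hlt, (⟨h1, h2⟩ | ⟨h1, h2⟩)⟩
        · exact Or.inl ⟨p.2, ⟨h1 ▸ hlt, h2⟩, h1.symm, rfl⟩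
        · exact Or.inr ⟨p.1, ⟨h2, h1 ▸ hlt⟩, rfl, h1.symm⟩
      · rintro (⟨b, ⟨h1, h2⟩, hb1, hb2⟩ | ⟨a, ⟨h1, h2⟩, ha1, ha2⟩)
        · exact ⟨hb1 ▸ hb2 ▸ h1, Or.inl ⟨hb1.symm, hb2 ▸ h2⟩⟩
        · exact ⟨ha1 ▸ ha2 ▸ h2, Or.inr ⟨ha2.symm, ha1 ▸ h1⟩⟩
    have hinj1 : Function.Injective (fun b : Fin n => (i, b)) := by
      intro x y h; simpa using h
    have hinj2 : Function.Injective (fun a : Fin n => (a, j)) := by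
      intro x y h; simpa using h
    have hint : ((Finset.Ioc i j).image (fun b => (i, b))) ∩
        ((Finset.Ico i j).image (fun a => (a, j))) = {(i, j)} := by
      ext p
      simp only [Finset.mem_inter, Finset.mem_image, Finset.mem_Ioc, Finset.mem_Ico,
        Finset.mem_singleton, Prod.ext_iff]
      constructor
      · rintro ⟨⟨b, ⟨h1, h2⟩, hb1, hb2⟩, ⟨a, ⟨h3, h4⟩, ha1, ha2⟩⟩
        exact ⟨hb1.symm, ha2.symm⟩
      · rintro ⟨h1, h2⟩
        exact ⟨⟨j, ⟨hij, le_refl j⟩, h1.symm, h2.symm⟩, ⟨i, ⟨le_refl i, hij⟩, h1.symm, h2.symm⟩⟩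
    have := Finset.card_union_add_card_inter
      ((Finset.Ioc i j).image (fun b => (i, b)))
      ((Finset.Ico i j).image (fun a => (a, j)))
    rw [hint, Finset.card_singleton, Finset.card_image_of_injective _ hinj1,
      Finset.card_image_of_injective _ hinj2, Fin.card_Ioc, Fin.card_Ico, ← hXY] at this
    have hd : 1 ≤ j.val - i.val := by
      have : i.val < j.val := hij
      omega
    omega
  have hA1 : (A \ B).card + (A ∩ B).card = A.card := Finset.card_sdiff_add_card_inter A B
  have hC1 : (C \ B).card + (C ∩ B).card = C.card := Finset.card_sdiff_add_card_inter C B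
  have hAB : (A ∩ B).card ≤ B.card := Finset.card_le_card (Finset.inter_subset_right)
  have hiA : invNum (w * s) = A.card := rfl
  have hiC : invNum w = C.card := rfl
  omega

private lemma invNum_swap_bound' {n : ℕ} (w : Equiv.Perm (Fin n)) (i j : Fin n) (hij : i < j) :
    invNum w + 1 ≤ invNum (w * Equiv.swap i j) + 2 * (j.val - i.val) := by
  have h := invNum_swap_bound (w * Equiv.swap i j) i j hij
  rwa [mul_assoc, Equiv.swap_mul_self, mul_one] at h

private lemma invNum_tau {n : ℕ} [NeZero n] (hn : 1 ≤ n) (τ : Equiv.Perm (Fin n))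
    (hτ : ∀ i : Fin n, τ i = i + 1) (L : Fin n) (hLval : L.val = n - 1)
    (w : Equiv.Perm (Fin n)) :
    invNum (τ * w) + (n - 1) = invNum w + 2 * (w⁻¹ L).val := by
  classical
  set P : Fin n := w⁻¹ L with hPdef
  have hwP : w P = L := by simp [hPdef]
  have hτval : ∀ x : Fin n, (τ x).val = (x.val + 1) % n := by
    intro x
    rw [hτ x, Fin.val_add, Fin.val_one']
    conv_rhs => rw [Nat.add_mod, Nat.mod_eq_of_lt x.isLt]
  have hτL : (τ L).val = 0 := by
    rw [hτval, hLval]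
    have hnn : n - 1 + 1 = n := by omega
    rw [hnn, Nat.mod_self]
  have hτlt : ∀ x : Fin n, x ≠ L → (τ x).val = x.val + 1 := by
    intro x hx
    rw [hτval]
    apply Nat.mod_eq_of_lt
    have h1 : x.val < n := x.isLt
    have h2 : x.val ≠ n - 1 := fun h => hx (Fin.ext (by rw [h, hLval]))
    omega
  have hne : ∀ x : Fin n, x ≠ P → w x ≠ L := by
    intro x hx h
    exact hx (by rw [hPdef, ← h]; simp)
  have hval_lt : ∀ x : Fin n, x ≠ P → (w x).val < n - 1 := by
    intro x hx
    have h1 : (w x).val ≠ n - 1 := fun h => hne x hx (Fin.ext (by rw [h, hLval]))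
    have h2 : (w x).val < n := (w x).isLt
    omega
  set A : Finset (Fin n × Fin n) :=
    Finset.univ.filter (fun p => p.1 < p.2 ∧ (τ * w) p.2 < (τ * w) p.1) with hAdef
  set C : Finset (Fin n × Fin n) :=
    Finset.univ.filter (fun p => p.1 < p.2 ∧ w p.2 < w p.1) with hCdef
  set T : Finset (Fin n × Fin n) :=
    Finset.univ.filter (fun p => p.1 < p.2 ∧ (p.1 = P ∨ p.2 = P ∨ w p.2 < w p.1)) with hTdef
  set Row : Finset (Fin n × Fin n) :=
    Finset.univ.filter (fun p => p.1 < p.2 ∧ p.1 = P) with hRowdef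
  set Col : Finset (Fin n × Fin n) :=
    Finset.univ.filter (fun p => p.1 < p.2 ∧ p.2 = P) with hColdef
  have hAT : A ∪ Row = T := by
    ext p
    simp only [hAdef, hRowdef, hTdef, Finset.mem_union, Finset.mem_filter, Finset.mem_univ,
      true_and]
    constructor
    · rintro (⟨hlt, hinv⟩ | ⟨hlt, hp1⟩)
      · refine ⟨hlt, ?_⟩
        by_cases hp1 : p.1 = P
        · exact Or.inl hp1
        by_cases hp2 : p.2 = P
        · exact Or.inr (Or.inl hp2)
        · refine Or.inr (Or.inr ?_)
          have h1 := hτlt (w p.1) (hne p.1 hp1)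
          have h2 := hτlt (w p.2) (hne p.2 hp2)
          have hinv' : ((τ * w) p.2).val < ((τ * w) p.1).val := hinv
          rw [Equiv.Perm.mul_apply, Equiv.Perm.mul_apply, h1, h2] at hinv'
          exact Fin.lt_def.mpr (by omega)
      · exact ⟨hlt, Or.inl hp1⟩
    · rintro ⟨hlt, (hp1 | hp2 | hinv)⟩
      · exact Or.inr ⟨hlt, hp1⟩
      · refine Or.inl ⟨hlt, ?_⟩
        have hp1 : p.1 ≠ P := fun h => (ne_of_lt hlt) (h.trans hp2.symm)
        show ((τ * w) p.2).val < ((τ * w) p.1).val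
        rw [Equiv.Perm.mul_apply, Equiv.Perm.mul_apply, hp2, hwP, hτL,
          hτlt (w p.1) (hne p.1 hp1)]
        omega
      · by_cases hp1 : p.1 = P
        · exact Or.inr ⟨hlt, hp1⟩
        · refine Or.inl ⟨hlt, ?_⟩
          show ((τ * w) p.2).val < ((τ * w) p.1).val
          rw [Equiv.Perm.mul_apply, Equiv.Perm.mul_apply, hτlt (w p.1) (hne p.1 hp1)]
          by_cases hp2 : p.2 = P
          · rw [hp2, hwP, hτL]
            omega
          · rw [hτlt (w p.2) (hne p.2 hp2)]
            have : (w p.2).val < (w p.1).val := hinv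
            omega
  have hCT : C ∪ Col = T := by
    ext p
    simp only [hCdef, hColdef, hTdef, Finset.mem_union, Finset.mem_filter, Finset.mem_univ,
      true_and]
    constructor
    · rintro (⟨hlt, hinv⟩ | ⟨hlt, hp2⟩)
      · exact ⟨hlt, Or.inr (Or.inr hinv)⟩
      · exact ⟨hlt, Or.inr (Or.inl hp2)⟩
    · rintro ⟨hlt, (hp1 | hp2 | hinv)⟩
      · refine Or.inl ⟨hlt, ?_⟩
        have hp2 : p.2 ≠ P := fun h => (ne_of_lt hlt) (hp1.trans h.symm)
        have h2 : (w p.2).val < n - 1 := hval_lt p.2 hp2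
        show (w p.2).val < (w p.1).val
        rw [hp1, hwP, hLval]
        exact h2
      · exact Or.inr ⟨hlt, hp2⟩
      · exact Or.inl ⟨hlt, hinv⟩
  have hdisA : Disjoint A Row := by
    rw [Finset.disjoint_left]
    intro p hpA hpRow
    rw [hAdef, Finset.mem_filter] at hpA
    rw [hRowdef, Finset.mem_filter] at hpRow
    obtain ⟨-, hlt, hinv⟩ := hpA
    obtain ⟨-, -, hp1⟩ := hpRow
    have hinv' : ((τ * w) p.2).val < ((τ * w) p.1).val := hinv
    rw [Equiv.Perm.mul_apply, Equiv.Perm.mul_apply, hp1, hwP, hτL] at hinv'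
    omega
  have hdisC : Disjoint C Col := by
    rw [Finset.disjoint_left]
    intro p hpC hpCol
    rw [hCdef, Finset.mem_filter] at hpC
    rw [hColdef, Finset.mem_filter] at hpCol
    obtain ⟨-, hlt, hinv⟩ := hpC
    obtain ⟨-, -, hp2⟩ := hpCol
    have hinv' : (w p.2).val < (w p.1).val := hinv
    rw [hp2, hwP, hLval] at hinv'
    have := (w p.1).isLt
    omega
  have hRowcard : Row.card = n - 1 - P.val := by
    have hEq : Row = (Finset.Ioi P).image (fun b => (P, b)) := by
      ext p
      simp only [hRowdef, Finset.mem_filter, Finset.mem_univ, true_and, Finset.mem_image,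
        Finset.mem_Ioi, Prod.ext_iff]
      constructor
      · rintro ⟨hlt, hp1⟩
        exact ⟨p.2, hp1 ▸ hlt, hp1.symm, rfl⟩
      · rintro ⟨b, hb, hb1, hb2⟩
        exact ⟨hb1 ▸ hb2 ▸ hb, hb1.symm⟩
    rw [hEq, Finset.card_image_of_injective _ (fun x y h => by simpa using h), Fin.card_Ioi]
  have hColcard : Col.card = P.val := by
    have hEq : Col = (Finset.Iio P).image (fun a => (a, P)) := by
      ext p
      simp only [hColdef, Finset.mem_filter, Finset.mem_univ, true_and, Finset.mem_image,
        Finset.mem_Iio, Prod.ext_iff]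
      constructor
      · rintro ⟨hlt, hp2⟩
        exact ⟨p.1, hp2 ▸ hlt, rfl, hp2.symm⟩
      · rintro ⟨a, ha, ha1, ha2⟩
        exact ⟨ha1 ▸ ha2 ▸ ha, ha2.symm⟩
    rw [hEq, Finset.card_image_of_injective _ (fun x y h => by simpa using h), Fin.card_Iio]
  have h1 : A.card + Row.card = T.card := by
    rw [← Finset.card_union_of_disjoint hdisA, hAT]
  have h2 : C.card + Col.card = T.card := by
    rw [← Finset.card_union_of_disjoint hdisC, hCT]
  have hiA : invNum (τ * w) = A.card := rfl
  have hiC : invNum w = C.card := rfl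
  have hPlt : P.val < n := P.isLt
  omega

private lemma edge_fwd {n : ℕ} [NeZero n] (hn : 1 ≤ n) (τ : Equiv.Perm (Fin n))
    (hτ : ∀ i : Fin n, τ i = i + 1) (u v : Equiv.Perm (Fin n)) (h : qbEdge u v) :
    qbEdge (τ * u) (τ * v) := by
  obtain ⟨i, j, hij, rfl, hcase⟩ := h
  refine ⟨i, j, hij, (mul_assoc τ u (Equiv.swap i j)).symm, ?_⟩
  obtain ⟨L, hLval⟩ : ∃ L : Fin n, L.val = n - 1 := ⟨⟨n - 1, by omega⟩, rfl⟩
  have hEu := invNum_tau hn τ hτ L hLval u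
  have hEv := invNum_tau hn τ hτ L hLval (u * Equiv.swap i j)
  have hQ : (u * Equiv.swap i j)⁻¹ L = Equiv.swap i j (u⁻¹ L) := by
    rw [mul_inv_rev, Equiv.swap_inv, Equiv.Perm.mul_apply]
  rw [hQ] at hEv
  set P : Fin n := u⁻¹ L with hPdef
  have hd : i.val < j.val := hij
  rcases eq_or_ne P i with hPi | hPi
  · rw [hPi, Equiv.swap_apply_left] at hEv
    have hPval : P.val = i.val := by rw [hPi]
    rcases hcase with h1 | h1
    · exfalso
      have hb := invNum_swap_bound (τ * u) i j hij
      rw [mul_assoc] at hb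
      omega
    · left; omega
  · rcases eq_or_ne P j with hPj | hPj
    · rw [hPj, Equiv.swap_apply_right] at hEv
      have hPval : P.val = j.val := by rw [hPj]
      rcases hcase with h1 | h1
      · right; omega
      · exfalso
        have hb := invNum_swap_bound' (τ * u) i j hij
        rw [mul_assoc] at hb
        omega
    · rw [Equiv.swap_apply_of_ne_of_ne hPi hPj] at hEv
      rcases hcase with h1 | h1
      · left; omega
      · right; omega

private lemma edge_bwd {n : ℕ} [NeZero n] (hn : 1 ≤ n) (τ : Equiv.Perm (Fin n))
    (hτ : ∀ i : Fin n, τ i = i + 1) (u v : Equiv.Perm (Fin n))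
    (h : qbEdge (τ * u) (τ * v)) : qbEdge u v := by
  obtain ⟨i, j, hij, heq, hcase⟩ := h
  have hv : v = u * Equiv.swap i j := by
    have h' : τ * v = τ * (u * Equiv.swap i j) := by rw [heq, mul_assoc]
    exact mul_left_cancel h'
  subst hv
  refine ⟨i, j, hij, rfl, ?_⟩
  obtain ⟨L, hLval⟩ : ∃ L : Fin n, L.val = n - 1 := ⟨⟨n - 1, by omega⟩, rfl⟩
  have hEu := invNum_tau hn τ hτ L hLval u
  have hEv := invNum_tau hn τ hτ L hLval (u * Equiv.swap i j)
  have hQ : (u * Equiv.swap i j)⁻¹ L = Equiv.swap i j (u⁻¹ L) := by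
    rw [mul_inv_rev, Equiv.swap_inv, Equiv.Perm.mul_apply]
  rw [hQ] at hEv
  set P : Fin n := u⁻¹ L with hPdef
  have hd : i.val < j.val := hij
  rcases eq_or_ne P i with hPi | hPi
  · rw [hPi, Equiv.swap_apply_left] at hEv
    have hPval : P.val = i.val := by rw [hPi]
    rcases hcase with h1 | h1
    · right; omega
    · exfalso
      have hb := invNum_swap_bound' u i j hij
      omega
  · rcases eq_or_ne P j with hPj | hPj
    · rw [hPj, Equiv.swap_apply_right] at hEv
      have hPval : P.val = j.val := by rw [hPj]
      rcases hcase with h1 | h1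
      · exfalso
        have hb := invNum_swap_bound u i j hij
        omega
      · left; omega
    · rw [Equiv.swap_apply_of_ne_of_ne hPi hPj] at hEv
      rcases hcase with h1 | h1
      · left; omega
      · right; omega

/-- Left multiplication by the long cycle `τ = (1 2 ⋯ n)` is an automorphism
of the unweighted quantum Bruhat graph. -/
theorem long_cycle_automorphism (n : ℕ) [NeZero n] (hn : 1 ≤ n) (τ : Equiv.Perm (Fin n))
    (hτ : ∀ i : Fin n, τ i = i + 1) (u v : Equiv.Perm (Fin n)) :
    qbEdge u v ↔ qbEdge (τ * u) (τ * v) :=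
  ⟨edge_fwd hn τ hτ u v, edge_bwd hn τ hτ u v⟩
end

section
/- Let n ≥ 1 and let A, B be two k-element subsets of {1,...,n}. Then there exists r ∈ {1,...,n} such that A ≤_r B in the shifted Gale order. -/
lemma gale_of_prefix {n : ℕ} (A B : Finset (Fin n)) (h : A.card = B.card)
    (hp : ∀ t : Fin n, (B.filter (· ≤ t)).card ≤ (A.filter (· ≤ t)).card) : galeLE A B := by
  refine ⟨h, ?_⟩
  intro k hA hB t
  by_contra hlt
  push_neg at hlt
  set s := B.orderEmbOfFin hB t with hs
  have h1 : (Finset.Iic t).card ≤ (B.filter (· ≤ s)).card := by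
    rw [← Finset.card_image_of_injective _ (B.orderEmbOfFin hB).injective]
    apply Finset.card_le_card
    intro x hx
    simp only [Finset.mem_image, Finset.mem_Iic] at hx
    obtain ⟨i, hi, rfl⟩ := hx
    simp only [Finset.mem_filter]
    exact ⟨Finset.orderEmbOfFin_mem _ _ _, (B.orderEmbOfFin hB).monotone hi⟩
  have h2 : (A.filter (· ≤ s)).card ≤ (Finset.Iio t).card := by
    rw [← Finset.card_image_of_injective _ (A.orderEmbOfFin hA).injective]
    apply Finset.card_le_card
    intro x hx
    simp only [Finset.mem_filter] at hx
    obtain ⟨hxA, hxs⟩ := hx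
    have : x ∈ Set.range (A.orderEmbOfFin hA) := by
      rw [Finset.range_orderEmbOfFin]; exact hxA
    obtain ⟨i, rfl⟩ := this
    simp only [Finset.mem_image, Finset.mem_Iio]
    refine ⟨i, ?_, rfl⟩
    have : A.orderEmbOfFin hA i < A.orderEmbOfFin hA t := lt_of_le_of_lt hxs hlt
    exact (A.orderEmbOfFin hA).lt_iff_lt.mp this
  have hIic : (Finset.Iic t).card = t.val + 1 := by simp [Fin.card_Iic]
  have hIio : (Finset.Iio t).card = t.val := by simp [Fin.card_Iio]
  have := hp s
  omega

lemma rot_count {n : ℕ} (A : Finset (Fin n)) (r t : Fin n) :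
    (A.filter (fun x => (x - r).val ≤ t.val)).card
      + (A.filter (fun x => x.val < r.val)).card =
    if r.val + t.val < n then (A.filter (fun x => x.val ≤ r.val + t.val)).card
    else A.card + (A.filter (fun x => x.val ≤ r.val + t.val - n)).card := by
  have hn : 0 < n := r.pos
  have key : ∀ x : Fin n, (x - r).val = (x.val + (n - r.val)) % n := fun x => by
    rw [Fin.sub_def]; simp [Nat.add_comm]
  by_cases hc : r.val + t.val < n
  · rw [if_pos hc]
    have e1 : A.filter (fun x => (x - r).val ≤ t.val)
        = A.filter (fun x => r.val ≤ x.val ∧ x.val ≤ r.val + t.val) := by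
      apply Finset.filter_congr
      intro x _
      rw [key x]
      have hx := x.isLt
      have hr := r.isLt
      constructor
      · intro hle
        rcases le_or_gt r.val x.val with h | h
        · have : (x.val + (n - r.val)) % n = x.val - r.val := by
            have : x.val + (n - r.val) = (x.val - r.val) + n := by omega
            rw [this, Nat.add_mod_right, Nat.mod_eq_of_lt (by omega)]
          omega
        · have h3 : (x.val + (n - r.val)) % n = x.val + (n - r.val) := by
            rw [Nat.mod_eq_of_lt (by omega)]
          rw [h3] at hle; omega
      · intro ⟨h1, h2⟩
        have : (x.val + (n - r.val)) % n = x.val - r.val := by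
          have : x.val + (n - r.val) = (x.val - r.val) + n := by omega
          rw [this, Nat.add_mod_right, Nat.mod_eq_of_lt (by omega)]
        omega
    rw [e1]
    rw [← Finset.card_union_of_disjoint, ← Finset.filter_or]
    · congr 1
      apply Finset.filter_congr
      intro x _
      omega
    · rw [Finset.disjoint_filter]
      intro x _ hx
      omega
  · rw [if_neg hc]
    have e1 : A.filter (fun x => (x - r).val ≤ t.val)
        = A.filter (fun x => r.val ≤ x.val ∨ x.val ≤ r.val + t.val - n) := by
      apply Finset.filter_congr
      intro x _
      rw [key x]
      have hx := x.isLt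
      have hr := r.isLt
      have ht := t.isLt
      rcases le_or_gt r.val x.val with h | h
      · have : (x.val + (n - r.val)) % n = x.val - r.val := by
          have h4 : x.val + (n - r.val) = (x.val - r.val) + n := by omega
          rw [h4, Nat.add_mod_right, Nat.mod_eq_of_lt (by omega)]
        rw [this]; omega
      · have : (x.val + (n - r.val)) % n = x.val + (n - r.val) := by
          rw [Nat.mod_eq_of_lt (by omega)]
        rw [this]; omega
    rw [e1]
    -- inclusion-exclusion: |P| + |Q| = |P ∪ Q| + |P ∩ Q|
    have hpq := Finset.card_union_add_card_inter
      (A.filter (fun x => r.val ≤ x.val ∨ x.val ≤ r.val + t.val - n))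
      (A.filter (fun x => x.val < r.val))
    rw [← Finset.filter_or, ← Finset.filter_and] at hpq
    have eU : A.filter (fun x => (r.val ≤ x.val ∨ x.val ≤ r.val + t.val - n) ∨ x.val < r.val)
        = A := by
      rw [Finset.filter_eq_self]; intro x _; omega
    have eI : A.filter (fun x => (r.val ≤ x.val ∨ x.val ≤ r.val + t.val - n) ∧ x.val < r.val)
        = A.filter (fun x => x.val ≤ r.val + t.val - n) := by
      apply Finset.filter_congr
      intro x _
      have ht := t.isLt
      omega
    rw [eU, eI] at hpq
    omega

/-- Any two equal-sized subsets of `{1,…,n}` are comparable in some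
shifted Gale order. -/
theorem exists_shifted_gale (n k : ℕ) (hn : 1 ≤ n) (A B : Finset (Fin n))
    (hA : A.card = k) (hB : B.card = k) :
    ∃ r : Fin n, shiftedGaleLE r A B := by
  haveI : NeZero n := ⟨by omega⟩
  set F : ℕ → ℤ := fun j =>
    ((A.filter (fun x => x.val ≤ j)).card : ℤ) - ((B.filter (fun x => x.val ≤ j)).card : ℤ)
    with hF
  obtain ⟨m, hmmem, hm⟩ := Finset.exists_min_image (Finset.range n) F
    ⟨0, by simp; omega⟩
  rw [Finset.mem_range] at hmmem
  set r : Fin n := ⟨m, hmmem⟩ + 1 with hr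
  refine ⟨r, ?_⟩
  have hinj : Function.Injective (fun x : Fin n => x - r) := sub_left_injective
  have hcard : ∀ S : Finset (Fin n), (S.image (fun x => x - r)).card = S.card :=
    fun S => Finset.card_image_of_injective S hinj
  apply gale_of_prefix
  · rw [hcard, hcard, hA, hB]
  · intro t
    have himg : ∀ S : Finset (Fin n),
        ((S.image (fun x => x - r)).filter (· ≤ t)).card
          = (S.filter (fun x => (x - r).val ≤ t.val)).card := by
      intro S
      rw [Finset.filter_image, Finset.card_image_of_injective _ hinj]
      simp only [Fin.le_def]
    rw [himg, himg]
    have hrcA := rot_count A r t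
    have hrcB := rot_count B r t
    have hrval : r.val = (m + 1) % n := by
      rw [hr, Fin.add_def]
      simp [Nat.mod_eq_of_lt hmmem]
    have hABcard : A.card = B.card := hA.trans hB.symm
    -- relate the "below r" filters to F m
    have hbelow : ((A.filter (fun x => x.val < r.val)).card : ℤ)
        - ((B.filter (fun x => x.val < r.val)).card : ℤ) = F m := by
      by_cases hc : m + 1 < n
      · have hrv : r.val = m + 1 := by rw [hrval, Nat.mod_eq_of_lt hc]
        have eA : A.filter (fun x => x.val < r.val) = A.filter (fun x => x.val ≤ m) := by
          apply Finset.filter_congr; intro x _; rw [hrv]; omega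
        have eB : B.filter (fun x => x.val < r.val) = B.filter (fun x => x.val ≤ m) := by
          apply Finset.filter_congr; intro x _; rw [hrv]; omega
        rw [eA, eB, hF]
      · have hm1 : m + 1 = n := by omega
        have hrv : r.val = 0 := by rw [hrval, hm1, Nat.mod_self]
        have eA : A.filter (fun x => x.val < r.val) = ∅ := by
          rw [hrv]; simp
        have eB : B.filter (fun x => x.val < r.val) = ∅ := by
          rw [hrv]; simp
        have eA' : A.filter (fun x => x.val ≤ m) = A := by
          rw [Finset.filter_eq_self]; intro x _; have := x.isLt; omega
        have eB' : B.filter (fun x => x.val ≤ m) = B := by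
          rw [Finset.filter_eq_self]; intro x _; have := x.isLt; omega
        rw [eA, eB, hF]
        simp only [eA', eB']
        simp [hA, hB]
    have hFm0 : F m ≤ 0 := by
      have hlast : F (n - 1) = 0 := by
        have eA' : A.filter (fun x => x.val ≤ n - 1) = A := by
          rw [Finset.filter_eq_self]; intro x _; have := x.isLt; omega
        have eB' : B.filter (fun x => x.val ≤ n - 1) = B := by
          rw [Finset.filter_eq_self]; intro x _; have := x.isLt; omega
        rw [hF]; simp only [eA', eB']; simp [hA, hB]
      have := hm (n - 1) (by rw [Finset.mem_range]; omega)
      omega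
    by_cases hc : r.val + t.val < n
    · rw [if_pos hc] at hrcA hrcB
      have hmin := hm (r.val + t.val) (by rw [Finset.mem_range]; omega)
      rw [hF] at hmin hbelow
      simp only at hmin hbelow
      omega
    · rw [if_neg hc] at hrcA hrcB
      have ht := t.isLt
      have hc2 : m + 1 < n := by
        by_contra hcc
        have hmn : m + 1 = n := by omega
        rw [hmn, Nat.mod_self] at hrval
        omega
      have hrv : r.val = m + 1 := by rw [hrval, Nat.mod_eq_of_lt hc2]
      have hmin := hm (r.val + t.val - n) (by rw [Finset.mem_range]; omega)
      rw [hF] at hmin hbelow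
      simp only at hmin hbelow
      omega
end

section
/- Let n ≥ 1, let A, B be two k-element subsets of {1,...,n}, and let r ∈ {1,...,n}. Then A ≤_r B in the shifted Gale order if and only if #(B ∩ {1,...,r−1}) − #(A ∩ {1,...,r−1}) = depth(A,B) (where {1,...,0} denotes the empty set). -/
open Finset

/-- counting function -/
def cnt {n : ℕ} (S : Finset (Fin n)) (x : ℕ) : ℕ := (S.filter (fun a => a.val < x)).card

lemma card_filter_emb {n k : ℕ} (S : Finset (Fin n)) (h : S.card = k)
    (p : Fin n → Prop) [DecidablePred p] :
    (S.filter p).card = (univ.filter (fun t : Fin k => p (S.orderEmbOfFin h t))).card := by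
  have himg : S.filter p
      = (univ.filter (fun t : Fin k => p (S.orderEmbOfFin h t))).image (S.orderEmbOfFin h) := by
    ext a
    simp only [mem_filter, mem_image, mem_univ, true_and]
    constructor
    · rintro ⟨haS, hpa⟩
      obtain ⟨t, ht⟩ := (Set.ext_iff.mp (S.range_orderEmbOfFin h) a).mpr haS
      exact ⟨t, by rw [ht]; exact hpa, ht⟩
    · rintro ⟨t, hpt, rfl⟩
      exact ⟨S.orderEmbOfFin_mem h t, hpt⟩
  rw [himg, card_image_of_injective _ (S.orderEmbOfFin h).injective]

lemma galeLE_iff_count {n : ℕ} (A B : Finset (Fin n)) (hcard : A.card = B.card) :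
    galeLE A B ↔ ∀ x : ℕ, cnt B x ≤ cnt A x := by
  unfold cnt
  constructor
  · rintro ⟨hc, hle⟩ x
    rw [card_filter_emb A rfl (fun a => a.val < x),
        card_filter_emb B hcard.symm (fun b => b.val < x)]
    apply card_le_card
    intro t ht
    simp only [mem_filter, mem_univ, true_and] at *
    exact lt_of_le_of_lt (hle A.card rfl hcard.symm t) ht
  · intro hcount
    refine ⟨hcard, ?_⟩
    intro k hA' hB' t
    subst hA'
    by_contra hcon
    push_neg at hcon
    set x := (B.orderEmbOfFin hB' t).val + 1 with hx
    have h1 : t.val + 1 ≤ (B.filter (fun b => b.val < x)).card := by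
      rw [card_filter_emb B hB' (fun b => b.val < x)]
      calc t.val + 1 = (Iic t).card := (Fin.card_Iic t).symm
        _ ≤ _ := by
          apply card_le_card
          intro s hs
          simp only [mem_Iic] at hs
          simp only [mem_filter, mem_univ, true_and, hx]
          have : B.orderEmbOfFin hB' s ≤ B.orderEmbOfFin hB' t :=
            (B.orderEmbOfFin hB').monotone hs
          omega
    have h2 : (A.filter (fun a => a.val < x)).card ≤ t.val := by
      rw [card_filter_emb A rfl (fun a => a.val < x)]
      calc _ ≤ (Iio t).card := by
            apply card_le_card
            intro s hs
            simp only [mem_filter, mem_univ, true_and, hx] at hs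
            simp only [mem_Iio]
            have hlt : A.orderEmbOfFin rfl s < A.orderEmbOfFin rfl t := by
              have h3 : A.orderEmbOfFin rfl s ≤ B.orderEmbOfFin hB' t := by
                rw [Fin.le_def]; omega
              exact lt_of_le_of_lt h3 hcon
            exact (A.orderEmbOfFin rfl).strictMono.lt_iff_lt.mp hlt
        _ = t.val := Fin.card_Iio t
    have := hcount x
    omega

lemma fin_sub_val {n : ℕ} (a r : Fin n) :
    (a - r).val = if r.val ≤ a.val then a.val - r.val else a.val + n - r.val := by
  rw [Fin.coe_sub]
  have ha := a.isLt
  have hr := r.isLt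
  rcases le_or_gt r.val a.val with h | h
  · rw [if_pos h]
    have he : n - r.val + a.val = (a.val - r.val) + n := by omega
    rw [he, Nat.add_mod_right]
    exact Nat.mod_eq_of_lt (by omega)
  · rw [if_neg (not_le.mpr h)]
    have he : n - r.val + a.val = a.val + n - r.val := by omega
    rw [he]
    exact Nat.mod_eq_of_lt (by omega)

lemma cardlt_ge {n : ℕ} (S : Finset (Fin n)) (x : ℕ) (hx : n ≤ x) :
    cnt S x = S.card := by
  unfold cnt
  rw [filter_true_of_mem]
  intro a _
  exact lt_of_lt_of_le a.isLt hx

lemma count_shift {n : ℕ} (r : Fin n) (S : Finset (Fin n)) (x : ℕ) (hx : x ≤ n) :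
    cnt (S.image (fun a => a - r)) x + cnt S r.val
    = if r.val + x ≤ n then cnt S (r.val + x)
      else S.card + cnt S (r.val + x - n) := by
  unfold cnt
  haveI : NeZero n := ⟨r.pos.ne'⟩
  have hinj : Function.Injective (fun a : Fin n => a - r) := fun a b h => by
    simpa using congrArg (· + r) h
  rw [Finset.filter_image, card_image_of_injective _ hinj,
      ← Finset.card_union_add_card_inter, ← filter_or, ← filter_and]
  have hr := r.isLt
  rcases le_or_gt (r.val + x) n with h | h
  · rw [if_pos h]
    have e1 : S.filter (fun a => (a - r).val < x ∨ a.val < r.val)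
        = S.filter (fun a => a.val < r.val + x) := by
      apply filter_congr
      intro a _
      have ha := a.isLt
      rw [fin_sub_val]
      rcases le_or_gt r.val a.val with h' | h'
      · rw [if_pos h']; omega
      · rw [if_neg (not_le.mpr h')]; omega
    have e2 : S.filter (fun a => (a - r).val < x ∧ a.val < r.val) = ∅ := by
      apply filter_false_of_mem
      intro a _
      have ha := a.isLt
      rw [fin_sub_val]
      rcases le_or_gt r.val a.val with h' | h'
      · rw [if_pos h']; omega
      · rw [if_neg (not_le.mpr h')]; omega
    rw [e1, e2, card_empty, Nat.add_zero]
  · rw [if_neg (not_le.mpr h)]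
    have e1 : S.filter (fun a => (a - r).val < x ∨ a.val < r.val) = S := by
      apply filter_true_of_mem
      intro a _
      have ha := a.isLt
      rw [fin_sub_val]
      rcases le_or_gt r.val a.val with h' | h'
      · rw [if_pos h']; omega
      · rw [if_neg (not_le.mpr h')]; omega
    have e2 : S.filter (fun a => (a - r).val < x ∧ a.val < r.val)
        = S.filter (fun a => a.val < r.val + x - n) := by
      apply filter_congr
      intro a _
      have ha := a.isLt
      rw [fin_sub_val]
      rcases le_or_gt r.val a.val with h' | h'
      · rw [if_pos h']; omega
      · rw [if_neg (not_le.mpr h')]; omega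
    rw [e1, e2]

/-- `A ≤_r B` iff `#(B ∩ {1,…,r−1}) − #(A ∩ {1,…,r−1}) = depth(A,B)`;
here `r : Fin n` encodes the paper's `r = r.val + 1`, so `{1,…,r−1}` is `{x : x.val < r.val}`. -/
theorem shifted_gale_iff_depth (n k : ℕ) (hn : 1 ≤ n) (A B : Finset (Fin n))
    (hA : A.card = k) (hB : B.card = k) (r : Fin n) :
    shiftedGaleLE r A B ↔
      ((B.filter (fun x => x.val < r.val)).card : ℤ) -
        ((A.filter (fun x => x.val < r.val)).card : ℤ) = (depthAB A B : ℤ) := by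
  classical
  haveI : NeZero n := ⟨Nat.one_le_iff_ne_zero.mp hn⟩
  have hinj : Function.Injective (fun a : Fin n => a - r) := fun a b h => by
    simpa using congrArg (· + r) h
  have hAB : (A.image (fun x => x - r)).card = (B.image (fun x => x - r)).card := by
    rw [Finset.card_image_of_injective _ hinj, Finset.card_image_of_injective _ hinj, hA, hB]
  rw [shiftedGaleLE, galeLE_iff_count _ _ hAB]
  show _ ↔ ((cnt B r.val : ℤ) - (cnt A r.val : ℤ) = (depthAB A B : ℤ))
  have hd : depthAB A B = (Finset.range (n + 1)).sup (fun x => cnt B x - cnt A x) := rfl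
  have hr := r.isLt
  have hdub : ∀ y, y ≤ n → cnt B y - cnt A y ≤ depthAB A B := by
    intro y hy
    rw [hd]
    exact Finset.le_sup (f := fun x => cnt B x - cnt A x) (Finset.mem_range_succ_iff.mpr hy)
  have hcAn : ∀ x, n ≤ x → cnt A x = k := by
    intro x hx; rw [cardlt_ge A x hx, hA]
  have hcBn : ∀ x, n ≤ x → cnt B x = k := by
    intro x hx; rw [cardlt_ge B x hx, hB]
  constructor
  · intro H
    have h0 : (cnt A r.val : ℤ) ≤ (cnt B r.val : ℤ) := by
      have hx : n - r.val ≤ n := by omega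
      have eB := count_shift r B (n - r.val) hx
      have eA := count_shift r A (n - r.val) hx
      rw [if_pos (by omega)] at eB eA
      have hrn : r.val + (n - r.val) = n := by omega
      rw [hrn] at eB eA
      have hBn := hcBn n le_rfl
      have hAn := hcAn n le_rfl
      have := H (n - r.val)
      omega
    have key : ∀ y, y ≤ n → (cnt B y : ℤ) - cnt A y ≤ (cnt B r.val : ℤ) - cnt A r.val := by
      intro y hy
      rcases le_or_gt r.val y with hry | hry
      · have hx : y - r.val ≤ n := by omega
        have eB := count_shift r B (y - r.val) hx
        have eA := count_shift r A (y - r.val) hx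
        rw [if_pos (by omega)] at eB eA
        have hrn : r.val + (y - r.val) = y := by omega
        rw [hrn] at eB eA
        have := H (y - r.val)
        omega
      · rcases Nat.eq_zero_or_pos y with rfl | hy1
        · have hB0 : cnt B 0 = 0 := by simp [cnt]
          have hA0 : cnt A 0 = 0 := by simp [cnt]
          omega
        · have hx : y + n - r.val ≤ n := by omega
          have eB := count_shift r B (y + n - r.val) hx
          have eA := count_shift r A (y + n - r.val) hx
          rw [if_neg (by omega)] at eB eA
          have hrn : r.val + (y + n - r.val) - n = y := by omega
          rw [hrn] at eB eA
          have := H (y + n - r.val)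
          rw [hA] at eA; rw [hB] at eB
          omega
    have h1 : cnt B r.val - cnt A r.val ≤ depthAB A B := hdub r.val (by omega)
    have h2 : depthAB A B ≤ cnt B r.val - cnt A r.val := by
      rw [hd]
      apply Finset.sup_le
      intro x hx
      show cnt B x - cnt A x ≤ _
      have := key x (Finset.mem_range_succ_iff.mp hx)
      omega
    omega
  · intro heq x
    have h0d : (0 : ℤ) ≤ (cnt B r.val : ℤ) - cnt A r.val := by
      have : (0 : ℤ) ≤ (depthAB A B : ℤ) := Int.ofNat_nonneg _
      omega
    have hub : ∀ y, y ≤ n → (cnt B y : ℤ) - cnt A y ≤ (cnt B r.val : ℤ) - cnt A r.val := by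
      intro y hy
      have := hdub y hy
      omega
    rcases le_or_gt n x with hge | hlt
    · have e1 : cnt (B.image (fun a => a - r)) x = k := by
        rw [cardlt_ge _ x hge, Finset.card_image_of_injective _ hinj, hB]
      have e2 : cnt (A.image (fun a => a - r)) x = k := by
        rw [cardlt_ge _ x hge, Finset.card_image_of_injective _ hinj, hA]
      omega
    · have hx : x ≤ n := le_of_lt hlt
      have eB := count_shift r B x hx
      have eA := count_shift r A x hx
      rcases le_or_gt (r.val + x) n with hc | hc
      · rw [if_pos hc] at eB eA
        have := hub (r.val + x) hc
        omega
      · rw [if_neg (not_le.mpr hc)] at eB eA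
        have := hub (r.val + x - n) (by omega)
        rw [hA] at eA; rw [hB] at eB
        omega
end

section
/- Let n ≥ 1, let A, B be two k-element subsets of {1,...,n}, and let r ≠ r' ∈ {1,...,n} be such that A ≤_r B and A ≤_{r'} B. Then the intervals in the two shifted Gale orders coincide: {I ⊆ {1,...,n} : |I| = k, A ≤_r I ≤_r B} = {I ⊆ {1,...,n} : |I| = k, A ≤_{r'} I ≤_{r'} B}. -/
namespace IntervalAux

variable {n : ℕ}

def cntLt (X : Finset (Fin n)) (m : ℕ) : ℕ := (X.filter (fun x => x.val < m)).card

lemma cntLt_le_card (X : Finset (Fin n)) (m : ℕ) : cntLt X m ≤ X.card :=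
  Finset.card_filter_le _ _

lemma cntLt_top (X : Finset (Fin n)) {m : ℕ} (h : n ≤ m) : cntLt X m = X.card := by
  unfold cntLt
  rw [Finset.filter_true_of_mem (fun x _ => lt_of_lt_of_le x.isLt h)]

lemma cntLt_eq_card_filter {k : ℕ} (X : Finset (Fin n)) (hX : X.card = k) (m : ℕ) :
    cntLt X m = (Finset.univ.filter (fun i : Fin k => ((X.orderEmbOfFin hX) i).val < m)).card := by
  symm
  apply Finset.card_bij (fun i _ => X.orderEmbOfFin hX i)
  · intro i hi
    simp only [Finset.mem_filter, Finset.mem_univ, true_and] at hi ⊢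
    exact ⟨Finset.orderEmbOfFin_mem X hX i, hi⟩
  · intro a _ b _ hab
    exact (X.orderEmbOfFin hX).injective hab
  · intro x hx
    simp only [Finset.mem_filter, cntLt] at hx
    have : x ∈ Set.range (X.orderEmbOfFin hX) := by
      rw [Finset.range_orderEmbOfFin]; exact hx.1
    obtain ⟨i, hi⟩ := this
    exact ⟨i, by simp [hi, hx.2], hi⟩

lemma card_filter_lt {k : ℕ} (t : Fin k) :
    (Finset.univ.filter (fun i : Fin k => i < t)).card = t.val := by
  have : Finset.univ.filter (fun i : Fin k => i < t) = Finset.Iio t := by ext i; simp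
  rw [this, Fin.card_Iio]

lemma card_filter_le {k : ℕ} (t : Fin k) :
    (Finset.univ.filter (fun i : Fin k => i ≤ t)).card = t.val + 1 := by
  have : Finset.univ.filter (fun i : Fin k => i ≤ t) = Finset.Iic t := by ext i; simp
  rw [this, Fin.card_Iic]

/-- Gale order iff prefix counts. -/
lemma galeLE_iff_cnt (A B : Finset (Fin n)) :
    galeLE A B ↔ (A.card = B.card ∧ ∀ m : ℕ, cntLt B m ≤ cntLt A m) := by
  constructor
  · rintro ⟨hcard, hle⟩
    refine ⟨hcard, fun m => ?_⟩
    rw [cntLt_eq_card_filter A rfl m, cntLt_eq_card_filter B hcard.symm m]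
    apply Finset.card_le_card
    intro i hi
    simp only [Finset.mem_filter, Finset.mem_univ, true_and] at hi ⊢
    exact lt_of_le_of_lt (hle A.card rfl hcard.symm i) hi
  · rintro ⟨hcard, hcnt⟩
    refine ⟨hcard, fun k hA hB t => ?_⟩
    by_contra hlt
    push_neg at hlt
    have hm := hcnt ((B.orderEmbOfFin hB t).val + 1)
    rw [cntLt_eq_card_filter A hA, cntLt_eq_card_filter B hB] at hm
    have h1 : (Finset.univ.filter (fun i : Fin k => ((A.orderEmbOfFin hA) i).val
        < (B.orderEmbOfFin hB t).val + 1)).card ≤ t.val := by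
      calc _ ≤ (Finset.univ.filter (fun i : Fin k => i < t)).card := by
              apply Finset.card_le_card
              intro i hi
              simp only [Finset.mem_filter, Finset.mem_univ, true_and] at hi ⊢
              by_contra hit
              push_neg at hit
              have h3 : (A.orderEmbOfFin hA t : Fin n) ≤ A.orderEmbOfFin hA i :=
                (A.orderEmbOfFin hA).monotone hit
              have h4 : (B.orderEmbOfFin hB t : Fin n) < A.orderEmbOfFin hA t := hlt
              have := h3.trans_lt' h4
              omega
        _ = t.val := card_filter_lt t
    have h2 : t.val + 1 ≤ (Finset.univ.filter (fun i : Fin k => ((B.orderEmbOfFin hB) i).val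
        < (B.orderEmbOfFin hB t).val + 1)).card := by
      rw [← card_filter_le t]
      apply Finset.card_le_card
      intro i hi
      simp only [Finset.mem_filter, Finset.mem_univ, true_and] at hi ⊢
      have h3 : (B.orderEmbOfFin hB i : Fin n) ≤ B.orderEmbOfFin hB t :=
        (B.orderEmbOfFin hB).monotone hi
      omega
    omega

lemma sub_val [NeZero n] (x s : Fin n) :
    (x - s).val = if s.val ≤ x.val then x.val - s.val else x.val + n - s.val := by
  have hn : 0 < n := Nat.pos_of_ne_zero (NeZero.ne n)
  have hx := x.isLt
  have hs := s.isLt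
  rw [Fin.sub_def]
  simp only
  rcases le_or_gt s.val x.val with h | h
  · have e : n - s.val + x.val = (x.val - s.val) + n := by omega
    rw [e, Nat.add_mod_right, Nat.mod_eq_of_lt (by omega), if_pos h]
  · rw [Nat.mod_eq_of_lt (by omega), if_neg (by omega)]
    omega

lemma card_filter_partition (X : Finset (Fin n)) (p q : Fin n → Prop)
    [DecidablePred p] [DecidablePred q] (h : ∀ x, ¬(p x ∧ q x)) :
    (X.filter (fun x => p x ∨ q x)).card = (X.filter p).card + (X.filter q).card := by
  rw [Finset.filter_or, Finset.card_union_of_disjoint]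
  rw [Finset.disjoint_left]
  intro a ha hb
  simp only [Finset.mem_filter] at ha hb
  exact h a ⟨ha.2, hb.2⟩

lemma cnt_image_sub [NeZero n] (X : Finset (Fin n)) (s : Fin n) (hs : s ≠ 0) {m : ℕ}
    (hm : m ≤ n) :
    cntLt (X.image (fun x => x - s)) m =
      if s.val + m ≤ n then cntLt X (s.val + m) - cntLt X s.val
      else X.card - cntLt X s.val + cntLt X (s.val + m - n) := by
  have hn : 0 < n := Nat.pos_of_ne_zero (NeZero.ne n)
  have hspos : 0 < s.val := by
    rcases Nat.eq_zero_or_pos s.val with h | h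
    · exact absurd (Fin.ext (by simp [h])) hs
    · exact h
  have hslt := s.isLt
  have hinj : Function.Injective (fun x : Fin n => x - s) := (Equiv.subRight s).injective
  have himg : cntLt (X.image (fun x => x - s)) m
      = (X.filter (fun x => (x - s).val < m)).card := by
    unfold cntLt
    rw [Finset.filter_image, Finset.card_image_of_injective _ hinj]
  rw [himg]
  split_ifs with hcase
  · have e1 : (X.filter (fun x => (x - s).val < m))
        = X.filter (fun x => s.val ≤ x.val ∧ x.val < s.val + m) := by
      apply Finset.filter_congr
      intro x _
      rw [sub_val]
      have := x.isLt
      split_ifs with h <;> omega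
    have e2 : X.filter (fun x => x.val < s.val + m)
        = X.filter (fun x => x.val < s.val ∨ (s.val ≤ x.val ∧ x.val < s.val + m)) := by
      apply Finset.filter_congr
      intro x _
      omega
    have key : cntLt X (s.val + m) = cntLt X s.val
        + (X.filter (fun x => s.val ≤ x.val ∧ x.val < s.val + m)).card := by
      unfold cntLt
      rw [e2, card_filter_partition X (fun x => x.val < s.val)
          (fun x => s.val ≤ x.val ∧ x.val < s.val + m) (fun x => by omega)]
    rw [e1]
    omega
  · have e1 : (X.filter (fun x => (x - s).val < m))
        = X.filter (fun x => s.val ≤ x.val ∨ x.val < s.val + m - n) := by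
      apply Finset.filter_congr
      intro x _
      rw [sub_val]
      have := x.isLt
      split_ifs with h <;> omega
    rw [e1, card_filter_partition X (fun x => s.val ≤ x.val)
        (fun x => x.val < s.val + m - n) (fun x => by omega)]
    have e2 : X = X.filter (fun x => s.val ≤ x.val ∨ x.val < s.val) := by
      rw [Finset.filter_true_of_mem (fun x _ => by omega)]
    have key : X.card = (X.filter (fun x => s.val ≤ x.val)).card + cntLt X s.val := by
      unfold cntLt
      conv_lhs => rw [e2]
      rw [card_filter_partition X (fun x => s.val ≤ x.val) (fun x => x.val < s.val)
        (fun x => by omega)]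
    have h5 := cntLt_le_card X s.val
    unfold cntLt at *
    omega

/-- The main one-directional lemma. -/
lemma main [NeZero n] (s : Fin n) (hs : s ≠ 0) (A B I : Finset (Fin n))
    (hAB : galeLE A B) (hAB' : galeLE (A.image (fun x => x - s)) (B.image (fun x => x - s)))
    (hAI : galeLE A I) (hIB : galeLE I B) :
    galeLE (A.image (fun x => x - s)) (I.image (fun x => x - s)) ∧
      galeLE (I.image (fun x => x - s)) (B.image (fun x => x - s)) := by
  have hn : 0 < n := Nat.pos_of_ne_zero (NeZero.ne n)
  have hspos : 0 < s.val := by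
    rcases Nat.eq_zero_or_pos s.val with h | h
    · exact absurd (Fin.ext (by simp [h])) hs
    · exact h
  have hslt := s.isLt
  have hinj : Function.Injective (fun x : Fin n => x - s) := (Equiv.subRight s).injective
  rw [galeLE_iff_cnt] at hAB hAB' hAI hIB
  obtain ⟨hABc, hABm⟩ := hAB
  obtain ⟨_, hABm'⟩ := hAB'
  obtain ⟨hAIc, hAIm⟩ := hAI
  obtain ⟨hIBc, hIBm⟩ := hIB
  -- equality of counts at s
  have hBA : cntLt A s.val ≤ cntLt B s.val := by
    have := hABm' (n - s.val)
    rw [cnt_image_sub A s hs (by omega), cnt_image_sub B s hs (by omega)] at this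
    rw [if_pos (by omega), if_pos (by omega)] at this
    have eA : s.val + (n - s.val) = n := by omega
    rw [eA, cntLt_top A (le_refl n), cntLt_top B (le_refl n)] at this
    have h1 := cntLt_le_card A s.val
    have h2 := cntLt_le_card B s.val
    omega
  have hc : cntLt A s.val = cntLt B s.val := le_antisymm hBA (hABm s.val)
  have hcI : cntLt I s.val = cntLt A s.val := by
    have h1 := hAIm s.val
    have h2 := hIBm s.val
    omega
  constructor
  · rw [galeLE_iff_cnt]
    refine ⟨by rw [Finset.card_image_of_injective _ hinj, Finset.card_image_of_injective _ hinj,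
      hAIc], fun m => ?_⟩
    rcases le_or_gt m n with hm | hm
    · rw [cnt_image_sub A s hs hm, cnt_image_sub I s hs hm]
      split_ifs with h
      · have := hAIm (s.val + m)
        omega
      · have := hAIm (s.val + m - n)
        have h1 := cntLt_le_card A s.val
        have h2 := cntLt_le_card I s.val
        omega
    · rw [cntLt_top _ (le_of_lt hm), cntLt_top _ (le_of_lt hm),
        Finset.card_image_of_injective _ hinj, Finset.card_image_of_injective _ hinj, hAIc]
  · rw [galeLE_iff_cnt]
    refine ⟨by rw [Finset.card_image_of_injective _ hinj, Finset.card_image_of_injective _ hinj,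
      hIBc], fun m => ?_⟩
    rcases le_or_gt m n with hm | hm
    · rw [cnt_image_sub I s hs hm, cnt_image_sub B s hs hm]
      split_ifs with h
      · have := hIBm (s.val + m)
        omega
      · have := hIBm (s.val + m - n)
        have h1 := cntLt_le_card I s.val
        have h2 := cntLt_le_card B s.val
        omega
    · rw [cntLt_top _ (le_of_lt hm), cntLt_top _ (le_of_lt hm),
        Finset.card_image_of_injective _ hinj, Finset.card_image_of_injective _ hinj, hIBc]

lemma image_sub_sub [NeZero n] (X : Finset (Fin n)) (r s : Fin n) :
    (X.image (fun x => x - r)).image (fun x => x - s) = X.image (fun x => x - (r + s)) := by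
  rw [Finset.image_image]
  apply Finset.image_congr
  intro x _
  simp only [Function.comp_apply]
  rw [sub_sub]

end IntervalAux

/-- If `A ≤_r B` and `A ≤_{r'} B` for `r ≠ r'`, the intervals in the two
shifted Gale orders coincide. -/
theorem interval_eq_of_two_shifts (n k : ℕ) (hn : 1 ≤ n) (A B : Finset (Fin n))
    (hA : A.card = k) (hB : B.card = k) (r r' : Fin n) (hne : r ≠ r')
    (hr : shiftedGaleLE r A B) (hr' : shiftedGaleLE r' A B) :
    {I : Finset (Fin n) | I.card = k ∧ shiftedGaleLE r A I ∧ shiftedGaleLE r I B} =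
      {I : Finset (Fin n) | I.card = k ∧ shiftedGaleLE r' A I ∧ shiftedGaleLE r' I B} := by
  haveI : NeZero n := ⟨by omega⟩
  have key : ∀ (p q : Fin n), p ≠ q → shiftedGaleLE p A B → shiftedGaleLE q A B →
      ∀ J : Finset (Fin n), shiftedGaleLE p A J → shiftedGaleLE p J B →
      shiftedGaleLE q A J ∧ shiftedGaleLE q J B := by
    intro p q hpq hp hq J hAJ hJB
    have hs0 : q - p ≠ 0 := by
      intro h
      exact hpq (sub_eq_zero.mp h).symm
    have hpq' : p + (q - p) = q := by abel
    have himg : ∀ X : Finset (Fin n),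
        X.image (fun x => x - q) = (X.image (fun x => x - p)).image (fun x => x - (q - p)) := by
      intro X
      rw [IntervalAux.image_sub_sub, hpq']
    unfold shiftedGaleLE at *
    rw [himg A, himg B] at hq ⊢
    rw [himg J]
    exact IntervalAux.main (q - p) hs0 _ _ _ hp hq hAJ hJB
  ext I
  simp only [Set.mem_setOf_eq]
  constructor
  · rintro ⟨h1, h2, h3⟩
    obtain ⟨h4, h5⟩ := key r r' hne hr hr' I h2 h3
    exact ⟨h1, h4, h5⟩
  · rintro ⟨h1, h2, h3⟩
    obtain ⟨h4, h5⟩ := key r' r hne.symm hr' hr I h2 h3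
    exact ⟨h1, h4, h5⟩
end

section
/- Let n ≥ 1, let M be an invertible n×n complex matrix, let k ∈ {1,...,n}, and let I be a k-element subset of {1,...,n} such that the k×k minor of M on the rows indexed by I and the first k columns is nonzero. Then there exists a permutation w ∈ S_n with {w(1),...,w(k)} = I such that for every j ∈ {1,...,n}, the j×j minor of M on the rows indexed by {w(1),...,w(j)} and the first j columns is nonzero. -/
lemma minorP_eq {n j : ℕ} (M : Matrix (Fin n) (Fin n) ℂ) (I : Finset (Fin n))
    (hI : I.card = j) (hj : j ≤ n) :
    minorP M I = Matrix.det (Matrix.of fun t s : Fin j =>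
      M (I.orderEmbOfFin hI t) (Fin.castLE hj s)) := by
  subst hI; rfl

lemma minor_ne_iff {n j : ℕ} (M : Matrix (Fin n) (Fin n) ℂ) (I : Finset (Fin n))
    (hI : I.card = j) (hj : j ≤ n) :
    minorP M I ≠ 0 ↔ LinearIndependent ℂ
      (fun r : (I : Set (Fin n)) => fun s : Fin j => M r (Fin.castLE hj s)) := by
  have key : ∀ (A : Matrix (Fin j) (Fin j) ℂ), A.det ≠ 0 ↔ LinearIndependent ℂ (fun i => A i) := by
    intro A
    rw [← isUnit_iff_ne_zero, ← Matrix.isUnit_iff_isUnit_det]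
    exact Matrix.linearIndependent_rows_iff_isUnit.symm
  rw [minorP_eq M I hI hj, key]
  rw [← linearIndependent_equiv ((I.orderIsoOfFin hI).toEquiv.trans
    (Equiv.subtypeEquivRight (fun x => by simp)))]
  rfl

lemma minor_down {n j : ℕ} (M : Matrix (Fin n) (Fin n) ℂ) (I : Finset (Fin n))
    (hI : I.card = j + 1) (hm : minorP M I ≠ 0) :
    ∃ J ⊆ I, J.card = j ∧ minorP M J ≠ 0 := by
  have hj1 : j + 1 ≤ n := hI ▸ (by simpa using I.card_le_univ)
  have hj : j ≤ n := Nat.le_of_succ_le hj1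
  set e := I.orderEmbOfFin hI with he
  set A : Matrix (Fin (j+1)) (Fin (j+1)) ℂ :=
    Matrix.of (fun t s : Fin (j+1) => M (e t) (Fin.castLE hj1 s)) with hA
  rw [minorP_eq M I hI hj1] at hm
  rw [Matrix.det_succ_column A (Fin.last j)] at hm
  have : ∃ i : Fin (j+1), Matrix.det (A.submatrix i.succAbove (Fin.last j).succAbove) ≠ 0 := by
    by_contra h
    push_neg at h
    apply hm
    apply Finset.sum_eq_zero
    intro i _
    rw [h i]; ring
  obtain ⟨i, hi⟩ := this
  refine ⟨I.erase (e i), Finset.erase_subset _ _, ?_, ?_⟩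
  · rw [Finset.card_erase_of_mem (I.orderEmbOfFin_mem hI i), hI]; rfl
  · have hJc : (I.erase (e i)).card = j := by
      rw [Finset.card_erase_of_mem (I.orderEmbOfFin_mem hI i), hI]; rfl
    rw [minorP_eq M (I.erase (e i)) hJc hj]
    have hemb : (fun t : Fin j => e (i.succAbove t)) = ⇑((I.erase (e i)).orderEmbOfFin hJc) := by
      apply Finset.orderEmbOfFin_unique
      · intro x
        refine Finset.mem_erase.2 ⟨fun h => ?_, I.orderEmbOfFin_mem hI _⟩
        exact Fin.succAbove_ne i x (e.injective h)
      · exact e.strictMono.comp (Fin.strictMono_succAbove i)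
    convert hi using 2
    ext t s
    rw [← hemb]
    simp only [Matrix.submatrix_apply, Fin.succAbove_last, Matrix.of_apply]
    congr 1

lemma minor_up {n j : ℕ} (M : Matrix (Fin n) (Fin n) ℂ) (hM : IsUnit M.det) (I : Finset (Fin n))
    (hI : I.card = j) (hj : j < n) (hm : minorP M I ≠ 0) :
    ∃ r : Fin n, r ∉ I ∧ minorP M (insert r I) ≠ 0 := by
  classical
  have hj1 : j + 1 ≤ n := hj
  set F : Fin n → (Fin (j+1) → ℂ) := fun r s => M r (Fin.castLE hj1 s) with hF
  -- the family over I is linearly independent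
  have h1 := (minor_ne_iff M I hI hj.le).1 hm
  have hFI : LinearIndependent ℂ (fun r : (I : Set (Fin n)) => F r) := by
    apply LinearIndependent.of_comp (LinearMap.funLeft ℂ ℂ (Fin.castSucc : Fin j → Fin (j+1)))
    convert h1 with r
    rfl
  -- rows of M restricted to first j+1 columns span everything
  have hspan : Submodule.span ℂ (Set.range F) = ⊤ := by
    have hrows : LinearIndependent ℂ (fun i => M i) :=
      Matrix.linearIndependent_rows_iff_isUnit.2 ((Matrix.isUnit_iff_isUnit_det M).2 hM)
    have htop : Submodule.span ℂ (Set.range (fun i => M i)) = ⊤ :=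
      hrows.span_eq_top_of_card_eq_finrank' (by simp [Module.finrank_fin_fun])
    have hFc : F = ⇑(LinearMap.funLeft ℂ ℂ (Fin.castLE hj1)) ∘ (fun i => M i) := rfl
    rw [hFc, Set.range_comp, ← Submodule.map_span, htop, Submodule.map_top,
      LinearMap.range_eq_top]
    exact LinearMap.funLeft_surjective_of_injective ℂ ℂ _ (Fin.castLE_injective hj1)
  -- find a row not in the span of the rows of I
  have hex : ∃ r : Fin n, F r ∉ Submodule.span ℂ (F '' (I : Set (Fin n))) := by
    by_contra h
    push_neg at h
    have : Submodule.span ℂ (F '' (I : Set (Fin n))) = ⊤ := by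
      rw [eq_top_iff, ← hspan]
      exact Submodule.span_le.2 (Set.range_subset_iff.2 h)
    have hle : Module.finrank ℂ (Submodule.span ℂ (F '' (I : Set (Fin n)))) ≤ j := by
      have : F '' (I : Set (Fin n)) = ↑(I.image F) := by simp
      rw [this]
      exact le_trans (finrank_span_finset_le_card (I.image F))
        (le_trans (Finset.card_image_le) hI.le)
    rw [this, finrank_top] at hle
    simp [Module.finrank_fin_fun] at hle
  obtain ⟨r, hr⟩ := hex
  have hrI : r ∉ I := fun h => hr (Submodule.subset_span ⟨r, h, rfl⟩)
  refine ⟨r, hrI, ?_⟩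
  have hcard : (insert r I).card = j + 1 := by rw [Finset.card_insert_of_notMem hrI, hI]
  rw [minor_ne_iff M _ hcard hj1]
  have hset : ((insert r I : Finset (Fin n)) : Set (Fin n)) = insert r (I : Set (Fin n)) := by
    simp
  rw [hset]
  exact (linearIndepOn_insert (f := F) (a := r) (s := (I : Set (Fin n)))
    (by simpa using hrI)).2 ⟨hFI, hr⟩

lemma perm_of_chain {n : ℕ} (S : ℕ → Finset (Fin n)) (hcard : ∀ j ≤ n, (S j).card = j)
    (hsub : ∀ j < n, S j ⊆ S (j+1)) :
    ∃ w : Equiv.Perm (Fin n), ∀ j ≤ n, permSet w j = S j := by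
  classical
  have hmono : ∀ a b, a ≤ b → b ≤ n → S a ⊆ S b := by
    intro a b hab hbn
    induction b with
    | zero => simpa [Nat.le_zero.1 hab]
    | succ m ih =>
      rcases Nat.lt_or_ge a (m+1) with h | h
      · exact (ih (Nat.lt_succ_iff.1 h) (Nat.le_of_succ_le hbn)).trans
          (hsub m (Nat.lt_of_succ_le hbn))
      · have : a = m + 1 := le_antisymm hab h
        simp [this]
  have hdiff : ∀ t : Fin n, ∃ a, S (t.val + 1) \ S t.val = {a} := by
    intro t
    rw [← Finset.card_eq_one, Finset.card_sdiff_of_subset (hsub t.val t.isLt),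
      hcard (t.val+1) t.isLt, hcard t.val t.isLt.le]
    simp
  choose f hf using hdiff
  have hfmem : ∀ t : Fin n, f t ∈ S (t.val + 1) ∧ f t ∉ S t.val := by
    intro t
    have := hf t
    constructor
    · have : f t ∈ S (t.val + 1) \ S t.val := by rw [this]; simp
      exact (Finset.mem_sdiff.1 this).1
    · have : f t ∈ S (t.val + 1) \ S t.val := by rw [this]; simp
      exact (Finset.mem_sdiff.1 this).2
  have key : ∀ a b : Fin n, a < b → f a = f b → False := by
    intro a b hlt h
    have h1 : f a ∈ S b.val := hmono (a.val+1) b.val (Nat.succ_le_of_lt hlt) b.isLt.le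
      (hfmem a).1
    rw [h] at h1
    exact (hfmem b).2 h1
  have hinj : Function.Injective f := by
    intro t t' h
    rcases lt_trichotomy t t' with hlt | heq | hlt
    · exact absurd h (fun h => key t t' hlt h)
    · exact heq
    · exact absurd h.symm (fun h => key t' t hlt h)
  obtain ⟨hbij⟩ : Nonempty (Function.Bijective f) :=
    ⟨(Finite.injective_iff_bijective).1 hinj⟩
  refine ⟨Equiv.ofBijective f hbij, ?_⟩
  intro j hj
  induction j with
  | zero =>
    have : S 0 = ∅ := Finset.card_eq_zero.1 (hcard 0 (Nat.zero_le n))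
    simp [permSet, this]
  | succ m ih =>
    have hmn : m < n := Nat.lt_of_succ_le hj
    have hfilter : (Finset.univ.filter (fun i : Fin n => i.val < m + 1)) =
        insert ⟨m, hmn⟩ (Finset.univ.filter (fun i : Fin n => i.val < m)) := by
      ext x
      simp [Nat.lt_succ_iff_lt_or_eq, Fin.ext_iff, or_comm]
      omega
    have hstep : permSet (Equiv.ofBijective f hbij) (m+1) =
        insert (f ⟨m, hmn⟩) (permSet (Equiv.ofBijective f hbij) m) := by
      rw [permSet, hfilter, Finset.image_insert]
      rfl
    rw [hstep, ih hmn.le]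
    -- insert (f m) (S m) = S (m+1)
    have hsubset : insert (f ⟨m, hmn⟩) (S m) ⊆ S (m+1) := by
      intro x hx
      rcases Finset.mem_insert.1 hx with h | h
      · exact h ▸ (hfmem ⟨m, hmn⟩).1
      · exact hsub m hmn h
    apply Finset.eq_of_subset_of_card_le hsubset
    rw [hcard _ hj, Finset.card_insert_of_notMem (hfmem ⟨m, hmn⟩).2, hcard _ hmn.le]

lemma chain_down {n : ℕ} (M : Matrix (Fin n) (Fin n) ℂ) :
    ∀ (k : ℕ) (I : Finset (Fin n)), I.card = k → minorP M I ≠ 0 →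
    ∃ S : ℕ → Finset (Fin n), S k = I ∧ (∀ j ≤ k, (S j).card = j) ∧
      (∀ j < k, S j ⊆ S (j+1)) ∧ ∀ j ≤ k, minorP M (S j) ≠ 0 := by
  intro k
  induction k with
  | zero =>
    intro I hI hm
    refine ⟨fun _ => I, rfl, ?_, ?_, ?_⟩
    · intro j hj
      have : j = 0 := by omega
      simp [this, hI]
    · intro j hj
      omega
    · intro j hj
      exact hm
  | succ m ih =>
    intro I hI hm
    obtain ⟨J, hJI, hJc, hJm⟩ := minor_down M I hI hm
    obtain ⟨S', h1, h2, h3, h4⟩ := ih J hJc hJm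
    classical
    refine ⟨fun j => if j = m + 1 then I else S' j, by simp, ?_, ?_, ?_⟩
    · intro j hj
      by_cases h : j = m + 1
      · simp [h, hI]
      · simp only [h, if_false]
        exact h2 j (by omega)
    · intro j hj
      by_cases h : j = m
      · simp only [if_neg (by omega : j ≠ m + 1), if_pos (by omega : j + 1 = m + 1)]
        rw [h, h1]; exact hJI
      · simp only [if_neg (by omega : j ≠ m + 1), if_neg (by omega : j + 1 ≠ m + 1)]
        exact h3 j (by omega)
    · intro j hj
      by_cases h : j = m + 1
      · simpa [h] using hm
      · simp only [h, if_false]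
        exact h4 j (by omega)

lemma chain_up {n : ℕ} (M : Matrix (Fin n) (Fin n) ℂ) (hM : IsUnit M.det) :
    ∀ (d k : ℕ) (I : Finset (Fin n)), I.card = k → k + d = n → minorP M I ≠ 0 →
    ∃ S : ℕ → Finset (Fin n), S k = I ∧ (∀ j, k ≤ j → j ≤ n → (S j).card = j) ∧
      (∀ j, k ≤ j → j < n → S j ⊆ S (j+1)) ∧ ∀ j, k ≤ j → j ≤ n → minorP M (S j) ≠ 0 := by
  intro d
  induction d with
  | zero =>
    intro k I hI hkn hm
    refine ⟨fun _ => I, rfl, fun j h1 h2 => by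
      have : j = k := by omega
      simpa [this] using hI, fun j h1 h2 => by omega, fun j h1 h2 => by
      have : j = k := by omega
      simpa [this] using hm⟩
  | succ m ih =>
    intro k I hI hkn hm
    have hkn' : k < n := by omega
    obtain ⟨r, hr, hm'⟩ := minor_up M hM I hI hkn' hm
    have hc : (insert r I).card = k + 1 := by rw [Finset.card_insert_of_notMem hr, hI]
    obtain ⟨S', h1, h2, h3, h4⟩ := ih (k+1) (insert r I) hc (by omega) hm'
    classical
    refine ⟨fun j => if j = k then I else S' j, by simp, ?_, ?_, ?_⟩
    · intro j hj1 hj2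
      by_cases h : j = k
      · simp [h, hI]
      · simp only [h, if_false]; exact h2 j (by omega) hj2
    · intro j hj1 hj2
      by_cases h : j = k
      · simp only [if_pos h, if_neg (by omega : j + 1 ≠ k)]
        have : j + 1 = k + 1 := by omega
        rw [this, h1]
        exact Finset.subset_insert r I
      · simp only [if_neg h, if_neg (by omega : j + 1 ≠ k)]
        exact h3 j (by omega) hj2
    · intro j hj1 hj2
      by_cases h : j = k
      · simpa [h] using hm
      · simp only [h, if_false]; exact h4 j (by omega) hj2

/-- If the minor of an invertible matrix `M` on rows `I` and the first
`k = #I` columns is nonzero, there is a permutation `w` with `w[k] = I` all of whose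
leading minors `P_{w[j]}` of `M` are nonzero. -/
theorem exists_perm_minors_nonzero (n : ℕ) (hn : 1 ≤ n)
    (M : Matrix (Fin n) (Fin n) ℂ) (hM : IsUnit M.det)
    (k : ℕ) (hk : 1 ≤ k) (hkn : k ≤ n)
    (I : Finset (Fin n)) (hI : I.card = k) (hminor : minorP M I ≠ 0) :
    ∃ w : Equiv.Perm (Fin n), permSet w k = I ∧
      ∀ j : ℕ, 1 ≤ j → j ≤ n → minorP M (permSet w j) ≠ 0 := by
  classical
  obtain ⟨Sd, hd1, hd2, hd3, hd4⟩ := chain_down M k I hI hminor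
  obtain ⟨Su, hu1, hu2, hu3, hu4⟩ := chain_up M hM (n - k) k I hI (by omega) hminor
  set S : ℕ → Finset (Fin n) := fun j => if j ≤ k then Sd j else Su j with hS
  have hSk : S k = I := by simp [hS, hd1]
  have hScard : ∀ j ≤ n, (S j).card = j := by
    intro j hj
    by_cases h : j ≤ k
    · simpa [hS, h] using hd2 j h
    · simpa [hS, h] using hu2 j (by omega) hj
  have hSsub : ∀ j < n, S j ⊆ S (j+1) := by
    intro j hj
    by_cases h : j + 1 ≤ k
    · simpa [hS, h, (by omega : j ≤ k)] using hd3 j (by omega)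
    · by_cases h2 : j ≤ k
      · have hjk : j = k := by omega
        simp only [hS, if_pos h2, if_neg h]
        rw [hjk, hd1, ← hu1]
        exact hu3 k le_rfl (by omega)
      · simpa [hS, h, h2] using hu3 j (by omega) hj
  have hSm : ∀ j ≤ n, minorP M (S j) ≠ 0 := by
    intro j hj
    by_cases h : j ≤ k
    · simpa [hS, h] using hd4 j h
    · simpa [hS, h] using hu4 j (by omega) hj
  obtain ⟨w, hw⟩ := perm_of_chain S hScard hSsub
  refine ⟨w, ?_, ?_⟩
  · rw [hw k hkn, hSk]
  · intro j h1 h2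
    rw [hw j h2]
    exact hSm j h2
end
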